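/- arXiv:1905.13048 — 10 statements merged into one kernel-verified Lean document; each statement's English description precedes it below -/
import Mathlib

section
/- Let (g,[·,·,·]) be a 3-Lie algebra over a field K of characteristic 0 and let α: g → g be a 3-Lie algebra morphism, i.e. a linear map with α([x,y,z]) = [α(x),α(y),α(z)] for all x,y,z ∈ g. Define a new bracket by [x,y,z]_α := α([x,y,z]). Then (g, [·,·,·]_α, α) is a multiplicative 3-Hom-Lie algebra: [·,·,·]_α is trilinear and skew-symmetric, α([x,y,z]_α) = [α(x),α(y),α(z)]_α, and the Hom-Filippov-Jacobi identity [α(u),α(v),[x,y,z]_α]_α = [[u,v,x]_α,α(y),α(z)]_α + [α(x),[u,v,y]_α,α(z)]_α + [α(x),α(y),[u,v,z]_α]_α holds for all u,v,x,y,z ∈ g. -/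
/- Basic notions for (multiplicative) 3-Hom-Lie algebras over a field `K` of
characteristic zero, their representations and generalized representations,
following Mabrouk-Makhlouf-Massoud. -/

section ThreeHomLie

variable (K : Type*) [Field K] [CharZero K]
variable {g V : Type*} [AddCommGroup g] [Module K g] [AddCommGroup V] [Module K V]

/-- Trilinearity of a ternary map. -/
def IsTrilinearMap (b : g → g → g → V) : Prop :=
  (∀ y z, IsLinearMap K fun x => b x y z) ∧
  (∀ x z, IsLinearMap K fun y => b x y z) ∧
  (∀ x y, IsLinearMap K fun z => b x y z)

/-- Skew-symmetry of a ternary map (under the transpositions generating `S₃`). -/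
def IsSkewTri (b : g → g → g → V) : Prop :=
  (∀ x y z, b y x z = - b x y z) ∧ (∀ x y z, b x z y = - b x y z)

/-- The Hom-Filippov-Jacobi identity for a ternary bracket `b` twisted by `α`.
With `α = id` this is the Filippov-Jacobi identity of a `3`-Lie algebra. -/
def HomFJ (b : g → g → g → g) (α : g → g) : Prop :=
  ∀ u v x y z, b (α u) (α v) (b x y z) =
    b (b u v x) (α y) (α z) + b (α x) (b u v y) (α z) + b (α x) (α y) (b u v z)

/-- `(g, b, α)` is a multiplicative 3-Hom-Lie algebra: `b` is trilinear and
skew-symmetric, `α` is a linear algebra morphism, and the Hom-Filippov-Jacobi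
identity holds. -/
def IsMult3HomLie (b : g → g → g → g) (α : g → g) : Prop :=
  IsTrilinearMap K b ∧ IsSkewTri b ∧ IsLinearMap K α ∧
  (∀ x y z, α (b x y z) = b (α x) (α y) (α z)) ∧ HomFJ b α

/-- Bilinearity (with values in `End V`) of `ρ : g × g → End(V)`. -/
def IsBilinearRep (ρ : g → g → V → V) : Prop :=
  (∀ y v, IsLinearMap K fun x => ρ x y v) ∧
  (∀ x v, IsLinearMap K fun y => ρ x y v) ∧
  (∀ x y, IsLinearMap K (ρ x y))

/-- Skew-symmetry of `ρ : g × g → End(V)`. -/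
def IsSkewRep (ρ : g → g → V → V) : Prop := ∀ x y v, ρ y x v = - ρ x y v

/-- Conditions (R1), (R2), (R3) for a representation `(V, ρ, A)` of a
multiplicative 3-Hom-Lie algebra `(g, b, α)`. -/
def RepConds (b : g → g → g → g) (α : g → g) (ρ : g → g → V → V) (A : V → V) : Prop :=
  -- (R1)
  (∀ x1 x2 v, ρ (α x1) (α x2) (A v) = A (ρ x1 x2 v)) ∧
  -- (R2)
  (∀ x1 x2 x3 x4 v,
    ρ (α x1) (α x2) (ρ x3 x4 v) - ρ (α x3) (α x4) (ρ x1 x2 v) =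
      ρ (b x1 x2 x3) (α x4) (A v) - ρ (b x1 x2 x4) (α x3) (A v)) ∧
  -- (R3)
  (∀ x1 x2 x3 x4 v,
    ρ (b x1 x2 x3) (α x4) (A v) =
      ρ (α x2) (α x3) (ρ x1 x4 v) + ρ (α x3) (α x1) (ρ x2 x4 v) +
        ρ (α x1) (α x2) (ρ x3 x4 v))

/-- `(V, ρ, A)` is a representation of the multiplicative 3-Hom-Lie algebra
`(g, b, α)`: `ρ` is bilinear skew-symmetric with values in `End V`, `A ∈ gl(V)`
and (R1), (R2), (R3) hold. -/
def IsRep (b : g → g → g → g) (α : g → g) (ρ : g → g → V → V) (A : V → V) : Prop :=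
  IsBilinearRep K ρ ∧ IsSkewRep ρ ∧ IsLinearMap K A ∧ RepConds b α ρ A

/-- `ν : g → Hom(Λ²V, V)`: linearity in the `g`-argument and bilinearity in
the two `V`-arguments. -/
def IsNuMap (ν : g → V → V → V) : Prop :=
  (∀ u w, IsLinearMap K fun x => ν x u w) ∧
  (∀ x w, IsLinearMap K fun u => ν x u w) ∧
  (∀ x u, IsLinearMap K (ν x u))

/-- Skew-symmetry of `ν(x)` in its two `V`-arguments. -/
def IsSkewNu (ν : g → V → V → V) : Prop := ∀ x u w, ν x w u = - ν x u w

/-- Equations (GR1)–(GR6) for a generalized representation `(V; ρ, ν, A)` of a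
multiplicative 3-Hom-Lie algebra `(g, b, α)`. -/
def GenRepConds (b : g → g → g → g) (α : g → g) (ρ : g → g → V → V)
    (ν : g → V → V → V) (A : V → V) : Prop :=
  -- (GR1)
  (∀ x1 x2 x3 x4 v,
    ρ (α x1) (α x2) (ρ x3 x4 v) =
      ρ (b x1 x2 x3) (α x4) (A v) - ρ (b x1 x2 x4) (α x3) (A v) +
        ρ (α x3) (α x4) (ρ x1 x2 v)) ∧
  -- (GR2)
  (∀ x1 x2 x3 x4 v,
    ρ (b x1 x2 x3) (α x4) (A v) =
      ρ (α x2) (α x3) (ρ x1 x4 v) + ρ (α x3) (α x1) (ρ x2 x4 v) +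
        ρ (α x1) (α x2) (ρ x3 x4 v)) ∧
  -- (GR3)
  (∀ x1 x2 x3 v1 v2,
    ρ (α x1) (α x2) (ν x3 v1 v2) =
      ν (b x1 x2 x3) (A v1) (A v2) + ν (α x3) (ρ x1 x2 v1) (A v2) +
        ν (α x3) (A v1) (ρ x1 x2 v2)) ∧
  -- (GR4)
  (∀ x1 x2 x3 v1 v2,
    ν (α x1) (A v1) (ρ x2 x3 v2) =
      ν (α x3) (A v2) (ρ x2 x1 v1) + ν (α x2) (ρ x3 x1 v1) (A v2) +
        ρ (α x2) (α x3) (ν x1 v1 v2)) ∧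
  -- (GR5)
  (∀ x1 x2 v1 v2 v3,
    ν (α x1) (A v1) (ν x2 v2 v3) =
      ν (α x2) (ν x1 v1 v2) (A v3) + ν (α x2) (A v2) (ν x1 v1 v3)) ∧
  -- (GR6)
  (∀ x1 x2 v1 v2 v3,
    ν (α x1) (ν x2 v1 v2) (A v3) = ν (α x2) (ν x1 v1 v2) (A v3))

/-- `(V; ρ, ν, A)` is a generalized representation of the multiplicative
3-Hom-Lie algebra `(g, b, α)`. -/
def IsGenRep (b : g → g → g → g) (α : g → g) (ρ : g → g → V → V)
    (ν : g → V → V → V) (A : V → V) : Prop :=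
  IsBilinearRep K ρ ∧ IsSkewRep ρ ∧ IsNuMap K ν ∧ IsSkewNu ν ∧
    IsLinearMap K A ∧ GenRepConds b α ρ ν A

end ThreeHomLie

/-- twisting a 3-Lie algebra along a morphism `α` yields a
multiplicative 3-Hom-Lie algebra with bracket `[x,y,z]_α = α [x,y,z]`. -/
theorem twist_3Lie_is_mult3HomLie
    {K : Type*} [Field K] [CharZero K] {g : Type*} [AddCommGroup g] [Module K g]
    (b : g → g → g → g) (α : g → g)
    (hb : IsTrilinearMap K b) (hskew : IsSkewTri b)
    (hFJ : HomFJ b (id : g → g))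
    (hα : IsLinearMap K α)
    (hmorph : ∀ x y z, α (b x y z) = b (α x) (α y) (α z)) :
    IsMult3HomLie K (fun x y z => α (b x y z)) α := by
  obtain ⟨hb1, hb2, hb3⟩ := hb
  obtain ⟨hs1, hs2⟩ := hskew
  refine ⟨⟨?_, ?_, ?_⟩, ⟨?_, ?_⟩, hα, ?_, ?_⟩
  · intro y z
    exact ⟨fun a c => by dsimp only; rw [(hb1 y z).map_add, hα.map_add],
      fun c a => by dsimp only; rw [(hb1 y z).map_smul, hα.map_smul]⟩
  · intro x z
    exact ⟨fun a c => by dsimp only; rw [(hb2 x z).map_add, hα.map_add],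
      fun c a => by dsimp only; rw [(hb2 x z).map_smul, hα.map_smul]⟩
  · intro x y
    exact ⟨fun a c => by dsimp only; rw [(hb3 x y).map_add, hα.map_add],
      fun c a => by dsimp only; rw [(hb3 x y).map_smul, hα.map_smul]⟩
  · intro x y z; dsimp only; rw [hs1, hα.map_neg]
  · intro x y z; dsimp only; rw [hs2, hα.map_neg]
  · intro x y z; dsimp only; rw [hmorph]
  · intro u v x y z
    have hFJ' := hFJ (α u) (α v) (α x) (α y) (α z)
    simp only [id] at hFJ'
    dsimp only
    rw [hmorph x y z, hFJ', hα.map_add, hα.map_add,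
      ← hmorph u v x, ← hmorph u v y, ← hmorph u v z]
end

section
/- Let (g,[·,·,·]) be a 3-Lie algebra, (V,ρ) a representation of g (so ρ: g×g → End(V) is bilinear skew-symmetric and satisfies ρ([x1,x2,x3],x4) = ρ(x2,x3)ρ(x1,x4) + ρ(x3,x1)ρ(x2,x4) + ρ(x1,x2)ρ(x3,x4) and ρ(x1,x2)ρ(x3,x4) − ρ(x3,x4)ρ(x1,x2) = ρ([x1,x2,x3],x4) − ρ([x1,x2,x4],x3) for all xi ∈ g). Let α: g → g be a 3-Lie algebra morphism and A: V → V a linear map such that A∘ρ(x1,x2) = ρ(α(x1),α(x2))∘A for all x1,x2 ∈ g. Then (V, ρ̃ := A∘ρ, A) is a representation of the multiplicative 3-Hom-Lie algebra (g, [·,·,·]_α := α∘[·,·,·], α); that is, ρ̃ satisfies conditions (R1), (R2) and (R3) with respect to the bracket α∘[·,·,·], the twist map α and the map A. -/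
/-- twisting a representation of a 3-Lie algebra along a morphism
`α` and a compatible linear map `A` yields a representation `ρ̃ = A ∘ ρ` of the
multiplicative 3-Hom-Lie algebra `(g, α ∘ [·,·,·], α)` with respect to `A`. -/
theorem twist_rep_of_3Lie
    {K : Type*} [Field K] [CharZero K]
    {g V : Type*} [AddCommGroup g] [Module K g] [AddCommGroup V] [Module K V]
    (b : g → g → g → g)
    (hb : IsTrilinearMap K b) (hbskew : IsSkewTri b) (hFJ : HomFJ b (id : g → g))
    (ρ : g → g → V → V) (hρ : IsBilinearRep K ρ) (hρskew : IsSkewRep ρ)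
    (hρ1 : ∀ x1 x2 x3 x4 v,
      ρ (b x1 x2 x3) x4 v =
        ρ x2 x3 (ρ x1 x4 v) + ρ x3 x1 (ρ x2 x4 v) + ρ x1 x2 (ρ x3 x4 v))
    (hρ2 : ∀ x1 x2 x3 x4 v,
      ρ x1 x2 (ρ x3 x4 v) - ρ x3 x4 (ρ x1 x2 v) =
        ρ (b x1 x2 x3) x4 v - ρ (b x1 x2 x4) x3 v)
    (α : g → g) (hα : IsLinearMap K α)
    (hαmorph : ∀ x y z, α (b x y z) = b (α x) (α y) (α z))
    (A : V → V) (hA : IsLinearMap K A)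
    (hcomm : ∀ x1 x2 v, A (ρ x1 x2 v) = ρ (α x1) (α x2) (A v)) :
    IsRep K (fun x y z => α (b x y z)) α (fun x y v => A (ρ x y v)) A := by
  obtain ⟨h1, h2, h3⟩ := hρ
  have hsub : ∀ u w : V, A (u - w) = A u - A w := fun u w => by
    have h := hA.map_add u (-w)
    have h2 := hA.map_smul (-1 : K) w
    simp at h2
    simpa [sub_eq_add_neg, h2] using h
  refine ⟨⟨?_, ?_, ?_⟩, ?_, hA, ?_, ?_, ?_⟩
  · exact fun y v => ⟨fun a c => by dsimp only; rw [(h1 y v).map_add, hA.map_add],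
      fun c x => by dsimp only; rw [(h1 y v).map_smul, hA.map_smul]⟩
  · exact fun x v => ⟨fun a c => by dsimp only; rw [(h2 x v).map_add, hA.map_add],
      fun c y => by dsimp only; rw [(h2 x v).map_smul, hA.map_smul]⟩
  · exact fun x y => ⟨fun a c => by dsimp only; rw [(h3 x y).map_add, hA.map_add],
      fun c v => by dsimp only; rw [(h3 x y).map_smul, hA.map_smul]⟩
  · intro x y v
    dsimp only
    rw [hρskew]
    have := hA.map_smul (-1 : K) (ρ x y v)
    simpa using this
  · intro x1 x2 v
    dsimp only
    rw [← hcomm]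
  · intro x1 x2 x3 x4 v
    dsimp only
    simp only [← hcomm, ← hsub]
    rw [hρ2]
  · intro x1 x2 x3 x4 v
    dsimp only
    simp only [← hcomm, ← hA.map_add]
    rw [hρ1]
end

section
/- Let (g,[·,·,·],α) be a multiplicative 3-Hom-Lie algebra, V a vector space, A ∈ End(V), and ρ: g×g → End(V) a bilinear skew-symmetric map. Then (V,ρ,A) is a representation of g (i.e. (R1), (R2), (R3) hold) if and only if the direct sum g⊕V, equipped with the trilinear skew-symmetric bracket [x1+v1, x2+v2, x3+v3]_ρ = [x1,x2,x3] + ρ(x1,x2)v3 + ρ(x3,x1)v2 + ρ(x2,x3)v1 (for xi ∈ g, vi ∈ V) and the linear map α⊕A, is a multiplicative 3-Hom-Lie algebra (the semidirect product g ⋉_ρ V). -/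
/-- `(V, ρ, A)` is a representation of the multiplicative
3-Hom-Lie algebra `(g, b, α)` iff the semidirect-product bracket together with
`α ⊕ A` makes `g ⊕ V` a multiplicative 3-Hom-Lie algebra. -/
theorem rep_iff_semidirect_mult3HomLie
    {K : Type*} [Field K] [CharZero K]
    {g V : Type*} [AddCommGroup g] [Module K g] [AddCommGroup V] [Module K V]
    (b : g → g → g → g) (α : g → g) (hg : IsMult3HomLie K b α)
    (ρ : g → g → V → V) (hρ : IsBilinearRep K ρ) (hρskew : IsSkewRep ρ)
    (A : V → V) (hA : IsLinearMap K A) :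
    RepConds b α ρ A ↔
      IsMult3HomLie K
        (fun p q r : g × V =>
          (b p.1 q.1 r.1, ρ p.1 q.1 r.2 + ρ r.1 p.1 q.2 + ρ q.1 r.1 p.2))
        (fun p : g × V => (α p.1, A p.2)) := by
  obtain ⟨hb, hbs, hα, hmul, hFJ⟩ := hg
  have ρ0 : ∀ a c, ρ a c (0 : V) = 0 := fun a c => (hρ.2.2 a c).map_zero
  constructor
  · rintro ⟨hR1, hR2, hR3⟩
    refine ⟨⟨?_, ?_, ?_⟩, ⟨?_, ?_⟩, ⟨?_, ?_⟩, ?_, ?_⟩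
    · intro q r
      refine ⟨fun p p' => ?_, fun c p => ?_⟩
      · refine Prod.ext ?_ ?_ <;> simp only [Prod.fst_add, Prod.snd_add]
        · exact (hb.1 q.1 r.1).map_add p.1 p'.1
        · rw [(hρ.1 q.1 r.2).map_add, (hρ.2.1 r.1 q.2).map_add,
            (hρ.2.2 q.1 r.1).map_add]
          abel
      · refine Prod.ext ?_ ?_ <;> simp only [Prod.smul_fst, Prod.smul_snd]
        · exact (hb.1 q.1 r.1).map_smul c p.1
        · rw [(hρ.1 q.1 r.2).map_smul, (hρ.2.1 r.1 q.2).map_smul,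
            (hρ.2.2 q.1 r.1).map_smul, smul_add, smul_add]
    · intro p r
      refine ⟨fun q q' => ?_, fun c q => ?_⟩
      · refine Prod.ext ?_ ?_ <;> simp only [Prod.fst_add, Prod.snd_add]
        · exact (hb.2.1 p.1 r.1).map_add q.1 q'.1
        · rw [(hρ.2.1 p.1 r.2).map_add, (hρ.2.2 r.1 p.1).map_add,
            (hρ.1 r.1 p.2).map_add]
          abel
      · refine Prod.ext ?_ ?_ <;> simp only [Prod.smul_fst, Prod.smul_snd]
        · exact (hb.2.1 p.1 r.1).map_smul c q.1
        · rw [(hρ.2.1 p.1 r.2).map_smul, (hρ.2.2 r.1 p.1).map_smul,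
            (hρ.1 r.1 p.2).map_smul, smul_add, smul_add]
    · intro p q
      refine ⟨fun r r' => ?_, fun c r => ?_⟩
      · refine Prod.ext ?_ ?_ <;> simp only [Prod.fst_add, Prod.snd_add]
        · exact (hb.2.2 p.1 q.1).map_add r.1 r'.1
        · rw [(hρ.2.2 p.1 q.1).map_add, (hρ.1 p.1 q.2).map_add,
            (hρ.2.1 q.1 p.2).map_add]
          abel
      · refine Prod.ext ?_ ?_ <;> simp only [Prod.smul_fst, Prod.smul_snd]
        · exact (hb.2.2 p.1 q.1).map_smul c r.1
        · rw [(hρ.2.2 p.1 q.1).map_smul, (hρ.1 p.1 q.2).map_smul,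
            (hρ.2.1 q.1 p.2).map_smul, smul_add, smul_add]
    · intro p q r
      refine Prod.ext ?_ ?_ <;> simp only [Prod.fst_neg, Prod.snd_neg]
      · exact hbs.1 p.1 q.1 r.1
      · rw [hρskew p.1 q.1 r.2, hρskew r.1 q.1 p.2, hρskew p.1 r.1 q.2]
        abel
    · intro p q r
      refine Prod.ext ?_ ?_ <;> simp only [Prod.fst_neg, Prod.snd_neg]
      · exact hbs.2 p.1 q.1 r.1
      · rw [hρskew r.1 p.1 q.2, hρskew p.1 q.1 r.2, hρskew q.1 r.1 p.2]
        abel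
    · intro p p'
      refine Prod.ext ?_ ?_ <;> simp only [Prod.fst_add, Prod.snd_add]
      · exact hα.map_add p.1 p'.1
      · exact hA.map_add p.2 p'.2
    · intro c p
      refine Prod.ext ?_ ?_ <;> simp only [Prod.smul_fst, Prod.smul_snd]
      · exact hα.map_smul c p.1
      · exact hA.map_smul c p.2
    · intro p q r
      refine Prod.ext ?_ ?_
      · exact hmul p.1 q.1 r.1
      · show A (ρ p.1 q.1 r.2 + ρ r.1 p.1 q.2 + ρ q.1 r.1 p.2) =
            ρ (α p.1) (α q.1) (A r.2) + ρ (α r.1) (α p.1) (A q.2) +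
              ρ (α q.1) (α r.1) (A p.2)
        rw [hA.map_add, hA.map_add, hR1, hR1, hR1]
    · intro u v x y z
      refine Prod.ext ?_ ?_ <;>
        simp only [Prod.fst_add, Prod.snd_add]
      · exact hFJ u.1 v.1 x.1 y.1 z.1
      · show ρ (α u.1) (α v.1) _ + _ + _ = _
        have h1 : ρ (α u.1) (α v.1) (ρ x.1 y.1 z.2) =
            ρ (b u.1 v.1 x.1) (α y.1) (A z.2) - ρ (b u.1 v.1 y.1) (α x.1) (A z.2)
              + ρ (α x.1) (α y.1) (ρ u.1 v.1 z.2) := by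
          have h := hR2 u.1 v.1 x.1 y.1 z.2
          rw [← h]; abel
        have h2 : ρ (α u.1) (α v.1) (ρ z.1 x.1 y.2) =
            ρ (b u.1 v.1 z.1) (α x.1) (A y.2) - ρ (b u.1 v.1 x.1) (α z.1) (A y.2)
              + ρ (α z.1) (α x.1) (ρ u.1 v.1 y.2) := by
          have h := hR2 u.1 v.1 z.1 x.1 y.2
          rw [← h]; abel
        have h3 : ρ (α u.1) (α v.1) (ρ y.1 z.1 x.2) =
            ρ (b u.1 v.1 y.1) (α z.1) (A x.2) - ρ (b u.1 v.1 z.1) (α y.1) (A x.2)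
              + ρ (α y.1) (α z.1) (ρ u.1 v.1 x.2) := by
          have h := hR2 u.1 v.1 y.1 z.1 x.2
          rw [← h]; abel
        have h4 := hR3 x.1 y.1 z.1 u.1 v.2
        have h5 := hR3 x.1 y.1 z.1 v.1 u.2
        -- expand the LHS sum
        rw [(hρ.2.2 (α u.1) (α v.1)).map_add, (hρ.2.2 (α u.1) (α v.1)).map_add]
        -- flip skew terms
        rw [hρskew (b x.1 y.1 z.1) (α v.1) (A u.2)]
        rw [hρskew (b u.1 v.1 x.1) (α z.1) (A y.2)]
        rw [hρskew (b u.1 v.1 y.1) (α x.1) (A z.2)]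
        rw [hρskew (b u.1 v.1 z.1) (α y.1) (A x.2)]
        -- expand the three inner sums on the RHS
        rw [(hρ.2.2 (α y.1) (α z.1)).map_add, (hρ.2.2 (α y.1) (α z.1)).map_add]
        rw [(hρ.2.2 (α z.1) (α x.1)).map_add, (hρ.2.2 (α z.1) (α x.1)).map_add]
        rw [(hρ.2.2 (α x.1) (α y.1)).map_add, (hρ.2.2 (α x.1) (α y.1)).map_add]
        -- flip the inner skew terms involving u.2
        rw [hρskew x.1 v.1 u.2, hρskew y.1 v.1 u.2, hρskew z.1 v.1 u.2]
        rw [(hρ.2.2 (α y.1) (α z.1)).map_neg, (hρ.2.2 (α z.1) (α x.1)).map_neg,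
          (hρ.2.2 (α x.1) (α y.1)).map_neg]
        rw [h1, h2, h3, h4, h5]
        abel
  · rintro ⟨-, -, -, Hmul, HFJ⟩
    refine ⟨?_, ?_, ?_⟩
    · intro x1 x2 v
      have h := congrArg Prod.snd (Hmul (x1, (0 : V)) (x2, 0) (0, v))
      simp only [ρ0, hA.map_zero, add_zero, zero_add] at h
      exact h.symm
    · intro x1 x2 x3 x4 v
      have h := congrArg Prod.snd (HFJ (x1, (0 : V)) (x2, 0) (x3, 0) (x4, 0) (0, v))
      simp only [Prod.snd_add, ρ0, hA.map_zero, add_zero, zero_add] at h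
      rw [h, hρskew (b x1 x2 x4) (α x3) (A v)]
      abel
    · intro x1 x2 x3 x4 v
      have h := congrArg Prod.snd (HFJ (x4, (0 : V)) (0, v) (x1, 0) (x2, 0) (x3, 0))
      simp only [Prod.snd_add, ρ0, hA.map_zero, add_zero, zero_add] at h
      exact h
end

section
/- Let (g,[·,·,·],α) be a multiplicative 3-Hom-Lie algebra and (V;ρ,ν,A) a generalized representation of g, i.e. equations (GR1)–(GR6) hold. Assume moreover A∘ρ(x,y) = ρ(α(x),α(y))∘A and A(ν(x)(u,v)) = ν(α(x))(A(u),A(v)) for all x,y ∈ g, u,v ∈ V. Then the direct sum g⊕V, equipped with the trilinear skew-symmetric bracket [x1+v1, x2+v2, x3+v3]_{(ρ,ν)} = [x1,x2,x3] + ρ(x1,x2)v3 + ρ(x3,x1)v2 + ρ(x2,x3)v1 + ν(x1)(v2,v3) + ν(x2)(v3,v1) + ν(x3)(v1,v2) and the linear map α⊕A, is a multiplicative 3-Hom-Lie algebra (the generalized semidirect product of g and V). -/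
/-- the generalized semidirect product: given a generalized
representation `(V; ρ, ν, A)` of `(g, b, α)` with `A` intertwining `ρ` and `ν`,
the bracket `[·,·,·]_{(ρ,ν)}` together with `α ⊕ A` makes `g ⊕ V` a
multiplicative 3-Hom-Lie algebra. -/
theorem generalized_semidirect_product
    {K : Type*} [Field K] [CharZero K]
    {g V : Type*} [AddCommGroup g] [Module K g] [AddCommGroup V] [Module K V]
    (b : g → g → g → g) (α : g → g) (hg : IsMult3HomLie K b α)
    (ρ : g → g → V → V) (ν : g → V → V → V) (A : V → V)
    (hrep : IsGenRep K b α ρ ν A)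
    (hAρ : ∀ x y v, A (ρ x y v) = ρ (α x) (α y) (A v))
    (hAν : ∀ x u w, A (ν x u w) = ν (α x) (A u) (A w)) :
    IsMult3HomLie K
      (fun p q r : g × V =>
        (b p.1 q.1 r.1,
          ρ p.1 q.1 r.2 + ρ r.1 p.1 q.2 + ρ q.1 r.1 p.2 +
            ν p.1 q.2 r.2 + ν q.1 r.2 p.2 + ν r.1 p.2 q.2))
      (fun p : g × V => (α p.1, A p.2)) := by
  obtain ⟨⟨b1, b2, b3⟩, ⟨bs12, bs23⟩, hα, hαm, hFJ⟩ := hg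
  obtain ⟨⟨r1, r2, r3⟩, rs, ⟨n1, n2, n3⟩, ns, hA, g1, g2, g3, g4, g5, g6⟩ := hrep
  -- additivity / scalar lemmas
  have badd1 : ∀ x x' y z, b (x + x') y z = b x y z + b x' y z := fun x x' y z => (b1 y z).map_add x x'
  have badd2 : ∀ x y y' z, b x (y + y') z = b x y z + b x y' z := fun x y y' z => (b2 x z).map_add y y'
  have badd3 : ∀ x y z z', b x y (z + z') = b x y z + b x y z' := fun x y z z' => (b3 x y).map_add z z'
  have bsm1 : ∀ (c : K) x y z, b (c • x) y z = c • b x y z := fun c x y z => (b1 y z).map_smul c x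
  have bsm2 : ∀ (c : K) x y z, b x (c • y) z = c • b x y z := fun c x y z => (b2 x z).map_smul c y
  have bsm3 : ∀ (c : K) x y z, b x y (c • z) = c • b x y z := fun c x y z => (b3 x y).map_smul c z
  have radd1 : ∀ x x' y (v : V), ρ (x + x') y v = ρ x y v + ρ x' y v := fun x x' y v => (r1 y v).map_add x x'
  have radd2 : ∀ x y y' (v : V), ρ x (y + y') v = ρ x y v + ρ x y' v := fun x y y' v => (r2 x v).map_add y y'
  have radd3 : ∀ x y (v w : V), ρ x y (v + w) = ρ x y v + ρ x y w := fun x y v w => (r3 x y).map_add v w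
  have rsm1 : ∀ (c : K) x y (v : V), ρ (c • x) y v = c • ρ x y v := fun c x y v => (r1 y v).map_smul c x
  have rsm2 : ∀ (c : K) x y (v : V), ρ x (c • y) v = c • ρ x y v := fun c x y v => (r2 x v).map_smul c y
  have rsm3 : ∀ (c : K) x y (v : V), ρ x y (c • v) = c • ρ x y v := fun c x y v => (r3 x y).map_smul c v
  have nadd1 : ∀ x x' (u w : V), ν (x + x') u w = ν x u w + ν x' u w := fun x x' u w => (n1 u w).map_add x x'
  have nadd2 : ∀ x (u u' w : V), ν x (u + u') w = ν x u w + ν x u' w := fun x u u' w => (n2 x w).map_add u u'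
  have nadd3 : ∀ x (u w w' : V), ν x u (w + w') = ν x u w + ν x u w' := fun x u w w' => (n3 x u).map_add w w'
  have nsm1 : ∀ (c : K) x (u w : V), ν (c • x) u w = c • ν x u w := fun c x u w => (n1 u w).map_smul c x
  have nsm2 : ∀ (c : K) x (u w : V), ν x (c • u) w = c • ν x u w := fun c x u w => (n2 x w).map_smul c u
  have nsm3 : ∀ (c : K) x (u w : V), ν x u (c • w) = c • ν x u w := fun c x u w => (n3 x u).map_smul c w
  -- skew flips at composite level
  have rneg3 : ∀ x y (v : V), ρ x y (-v) = - ρ x y v := fun x y v => (r3 x y).map_neg v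
  have nneg2 : ∀ x (u w : V), ν x (-u) w = - ν x u w := fun x u w => (n2 x w).map_neg u
  have nneg3 : ∀ x (u w : V), ν x u (-w) = - ν x u w := fun x u w => (n3 x u).map_neg w
  have rr : ∀ p q s t (w : V), ρ p q (ρ t s w) = - ρ p q (ρ s t w) := fun p q s t w => by
    rw [rs s t w, rneg3]
  have rn : ∀ p q s (w1 w2 : V), ρ p q (ν s w2 w1) = - ρ p q (ν s w1 w2) := fun p q s w1 w2 => by
    rw [ns s w1 w2, rneg3]
  have nr2 : ∀ p (u : V) s t (w : V), ν p u (ρ t s w) = - ν p u (ρ s t w) := fun p u s t w => by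
    rw [rs s t w, nneg3]
  have nr1 : ∀ p s t (w u : V), ν p (ρ t s w) u = - ν p (ρ s t w) u := fun p s t w u => by
    rw [rs s t w, nneg2]
  have nn2 : ∀ p (u : V) s (w1 w2 : V), ν p u (ν s w2 w1) = - ν p u (ν s w1 w2) := fun p u s w1 w2 => by
    rw [ns s w1 w2, nneg3]
  have nn1 : ∀ p s (w1 w2 u : V), ν p (ν s w2 w1) u = - ν p (ν s w1 w2) u := fun p s w1 w2 u => by
    rw [ns s w1 w2, nneg2]
  -- the (a,b)-piece lemma
  have h3 : ∀ w w' : V, (3 : K) • w = (3 : K) • w' → w = w' := by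
    intro w w' h
    have h3ne : (3 : K) ≠ 0 := by norm_num
    have := congrArg (fun t => (3 : K)⁻¹ • t) h
    simpa [smul_smul, inv_mul_cancel₀ h3ne] using this
  have tsm : ∀ w : V, (3 : K) • w = w + w + w := by
    intro w
    rw [show (3 : K) = 1 + 1 + 1 by norm_num, add_smul, add_smul, one_smul]
  have hbcyc : ∀ x y z, b y z x = b x y z := by
    intro x y z
    rw [bs23 y x z, bs12 x y z, neg_neg]
  have hAB : ∀ x y z (a c : V),
      ρ (α y) (α z) (ν x a c) + ρ (α z) (α x) (ν y a c) + ρ (α x) (α y) (ν z a c) =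
        ν (b x y z) (A a) (A c) := by
    intro x y z a c
    have e1 : b y z x = b x y z := hbcyc x y z
    have e2 : b z x y = b x y z := (hbcyc y z x).trans (hbcyc x y z)
    have fB1 : ν (b y z x) (A a) (A c) = ν (b x y z) (A a) (A c) := by rw [e1]
    have fB2 : ν (b z x y) (A a) (A c) = ν (b x y z) (A a) (A c) := by rw [e2]
    refine h3 _ _ ?_
    rw [tsm, tsm]
    linear_combination (norm := abel)
      g3 y z x a c + g3 z x y a c + g3 x y z a c
      - g4 x y z a c - g4 y z x a c - g4 z x y a c
      + g4 x y z c a + g4 y z x c a + g4 z x y c a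
      + fB1 + fB2
      - nr2 (α z) (A c) x y a - nr2 (α x) (A c) y z a - nr2 (α y) (A c) z x a
      + nr2 (α z) (A a) x y c + nr2 (α x) (A a) y z c + nr2 (α y) (A a) z x c
      + ns (α y) (A a) (ρ z x c) + ns (α z) (A a) (ρ x y c) + ns (α x) (A a) (ρ y z c)
      + rn (α y) (α z) x a c + rn (α z) (α x) y a c + rn (α x) (α y) z a c
  refine ⟨?_, ?_, ?_, ?_, ?_⟩
  · -- trilinearity
    refine ⟨fun q r => ⟨fun p p' => ?_, fun c p => ?_⟩,
            fun p r => ⟨fun q q' => ?_, fun c q => ?_⟩,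
            fun p q => ⟨fun r r' => ?_, fun c r => ?_⟩⟩ <;>
      refine Prod.ext ?_ ?_ <;>
      simp only [Prod.fst_add, Prod.snd_add, Prod.smul_fst, Prod.smul_snd,
        badd1, badd2, badd3, bsm1, bsm2, bsm3, radd1, radd2, radd3,
        rsm1, rsm2, rsm3, nadd1, nadd2, nadd3, nsm1, nsm2, nsm3, smul_add] <;>
      abel
  · -- skew symmetry
    constructor
    · intro p q r
      refine Prod.ext ?_ ?_
      · simp only [Prod.fst_neg]; exact bs12 _ _ _
      · simp only [Prod.snd_neg]
        rw [rs p.1 q.1 r.2, rs q.1 r.1 p.2, rs r.1 p.1 q.2,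
            ns q.1 r.2 p.2, ns p.1 q.2 r.2, ns r.1 p.2 q.2]
        abel
    · intro p q r
      refine Prod.ext ?_ ?_
      · simp only [Prod.fst_neg]; exact bs23 _ _ _
      · simp only [Prod.snd_neg]
        rw [rs p.1 q.1 r.2, rs q.1 r.1 p.2, rs r.1 p.1 q.2,
            ns q.1 r.2 p.2, ns p.1 q.2 r.2, ns r.1 p.2 q.2]
        abel
  · -- linearity of α ⊕ A
    refine ⟨fun p q => ?_, fun c p => ?_⟩ <;> refine Prod.ext ?_ ?_ <;>
      simp only [Prod.fst_add, Prod.snd_add, Prod.smul_fst, Prod.smul_snd,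
        hα.map_add, hA.map_add, hα.map_smul, hA.map_smul]
  · -- multiplicativity
    intro p q r
    refine Prod.ext ?_ ?_
    · exact hαm _ _ _
    · simp only [hA.map_add, hAρ, hAν]
  · -- Hom-Filippov-Jacobi identity
    intro u v x y z
    refine Prod.ext ?_ ?_
    · exact hFJ _ _ _ _ _
    · simp only [Prod.snd_add, radd3, nadd2, nadd3]
      linear_combination (norm := abel)
        g1 u.1 v.1 x.1 y.1 z.2 - rs (b u.1 v.1 y.1) (α x.1) (A z.2)
        + g1 u.1 v.1 z.1 x.1 y.2 - rs (b u.1 v.1 x.1) (α z.1) (A y.2)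
        + g1 u.1 v.1 y.1 z.1 x.2 - rs (b u.1 v.1 z.1) (α y.1) (A x.2)
        + g2 x.1 y.1 z.1 u.1 v.2
        - g2 x.1 y.1 z.1 v.1 u.2 + rs (b x.1 y.1 z.1) (α v.1) (A u.2)
        - rr (α y.1) (α z.1) x.1 v.1 u.2 - rr (α z.1) (α x.1) y.1 v.1 u.2
        - rr (α x.1) (α y.1) z.1 v.1 u.2
        + g3 u.1 v.1 x.1 y.2 z.2 + g3 u.1 v.1 y.1 z.2 x.2 + g3 u.1 v.1 z.1 x.2 y.2
        + g4 u.1 x.1 y.1 v.2 z.2 + g4 u.1 z.1 x.1 v.2 y.2 + g4 u.1 y.1 z.1 v.2 x.2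
        + g5 u.1 x.1 v.2 y.2 z.2 + g5 u.1 y.1 v.2 z.2 x.2 + g5 u.1 z.1 v.2 x.2 y.2
        - g4 v.1 x.1 y.1 u.2 z.2 + ns (α v.1) (A u.2) (ρ x.1 y.1 z.2)
        - nr2 (α y.1) (A z.2) x.1 v.1 u.2 - nr1 (α x.1) y.1 v.1 u.2 (A z.2)
        - rn (α x.1) (α y.1) v.1 u.2 z.2
        - g4 v.1 z.1 x.1 u.2 y.2 + ns (α v.1) (A u.2) (ρ z.1 x.1 y.2)
        - nr2 (α x.1) (A y.2) z.1 v.1 u.2 - nr1 (α z.1) x.1 v.1 u.2 (A y.2)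
        - rn (α z.1) (α x.1) v.1 u.2 y.2
        - g4 v.1 y.1 z.1 u.2 x.2 + ns (α v.1) (A u.2) (ρ y.1 z.1 x.2)
        - nr2 (α z.1) (A x.2) y.1 v.1 u.2 - nr1 (α y.1) z.1 v.1 u.2 (A x.2)
        - rn (α y.1) (α z.1) v.1 u.2 x.2
        - g5 v.1 x.1 u.2 y.2 z.2 + ns (α v.1) (A u.2) (ν x.1 y.2 z.2)
        - nn1 (α x.1) v.1 u.2 y.2 (A z.2) - nn2 (α x.1) (A y.2) v.1 u.2 z.2
        - g5 v.1 y.1 u.2 z.2 x.2 + ns (α v.1) (A u.2) (ν y.1 z.2 x.2)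
        - nn1 (α y.1) v.1 u.2 z.2 (A x.2) - nn2 (α y.1) (A z.2) v.1 u.2 x.2
        - g5 v.1 z.1 u.2 x.2 y.2 + ns (α v.1) (A u.2) (ν z.1 x.2 y.2)
        - nn1 (α z.1) v.1 u.2 x.2 (A y.2) - nn2 (α z.1) (A x.2) v.1 u.2 y.2
        - hAB x.1 y.1 z.1 u.2 v.2
        - g6 x.1 y.1 u.2 v.2 z.2 - ns (α y.1) (ν x.1 u.2 v.2) (A z.2)
        + g6 x.1 z.1 u.2 v.2 y.2 - ns (α x.1) (ν z.1 u.2 v.2) (A y.2)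
        + g6 z.1 y.1 u.2 v.2 x.2 - ns (α z.1) (ν y.1 u.2 v.2) (A x.2)
end

section
/- Let (g,[·,·,·],α) be a multiplicative 3-Hom-Lie algebra, V a vector space, ρ: g×g → End(V) bilinear skew-symmetric, ν a map assigning linearly to each x ∈ g a bilinear skew-symmetric map ν(x): V×V → V, and A ∈ End(V). Define on g⊕V the trilinear skew-symmetric bracket [x1+v1, x2+v2, x3+v3]_{(ρ,ν)} = [x1,x2,x3] + ρ(x1,x2)v3 + ρ(x3,x1)v2 + ρ(x2,x3)v1 + ν(x1)(v2,v3) + ν(x2)(v3,v1) + ν(x3)(v1,v2). Then this bracket satisfies the Hom-Filippov-Jacobi identity with respect to the map α⊕A if and only if equations (GR1)–(GR6) hold, i.e. if and only if (V;ρ,ν,A) is a generalized representation of g. -/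
section SemidirectAux

variable {g V : Type*} [AddCommGroup V]

/-- The semidirect-product bracket on `g × V`. -/
def cbr3 (b : g → g → g → g) (ρ : g → g → V → V) (ν : g → V → V → V)
    (p q r : g × V) : g × V :=
  (b p.1 q.1 r.1,
    ρ p.1 q.1 r.2 + ρ r.1 p.1 q.2 + ρ q.1 r.1 p.2 +
      ν p.1 q.2 r.2 + ν q.1 r.2 p.2 + ν r.1 p.2 q.2)

/-- The map `α ⊕ A` on `g × V`. -/
def mal3 (α : g → g) (A : V → V) (p : g × V) : g × V := (α p.1, A p.2)

/-- The `V`-component of the Hom-Filippov-Jacobi defect of `cbr3` w.r.t. `mal3`. -/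
def Ed3 (b : g → g → g → g) (α : g → g) (ρ : g → g → V → V) (ν : g → V → V → V)
    (A : V → V) (u v x y z : g × V) : V :=
  (cbr3 b ρ ν (mal3 α A u) (mal3 α A v) (cbr3 b ρ ν x y z)).2 -
    ((cbr3 b ρ ν (cbr3 b ρ ν u v x) (mal3 α A y) (mal3 α A z)).2 +
      (cbr3 b ρ ν (mal3 α A x) (cbr3 b ρ ν u v y) (mal3 α A z)).2 +
      (cbr3 b ρ ν (mal3 α A x) (mal3 α A y) (cbr3 b ρ ν u v z)).2)

end SemidirectAux

set_option maxHeartbeats 4000000 in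
/-- the bracket `[·,·,·]_{(ρ,ν)}` on `g ⊕ V` satisfies the
Hom-Filippov-Jacobi identity with respect to `α ⊕ A` iff equations (GR1)–(GR6)
hold, i.e. iff `(V; ρ, ν, A)` is a generalized representation of `(g, b, α)`. -/
theorem homFJ_semidirect_iff_genRepConds
    {K : Type*} [Field K] [CharZero K]
    {g V : Type*} [AddCommGroup g] [Module K g] [AddCommGroup V] [Module K V]
    (b : g → g → g → g) (α : g → g) (hg : IsMult3HomLie K b α)
    (ρ : g → g → V → V) (hρ : IsBilinearRep K ρ) (hρskew : IsSkewRep ρ)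
    (ν : g → V → V → V) (hν : IsNuMap K ν) (hνskew : IsSkewNu ν)
    (A : V → V) (hA : IsLinearMap K A) :
    HomFJ
      (fun p q r : g × V =>
        (b p.1 q.1 r.1,
          ρ p.1 q.1 r.2 + ρ r.1 p.1 q.2 + ρ q.1 r.1 p.2 +
            ν p.1 q.2 r.2 + ν q.1 r.2 p.2 + ν r.1 p.2 q.2))
      (fun p : g × V => (α p.1, A p.2)) ↔
    GenRepConds b α ρ ν A := by
  obtain ⟨hbtri, hbskew, hαlin, hαmor, hbFJ⟩ := hg
  obtain ⟨hb1, hb2, hb3⟩ := hbtri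
  obtain ⟨hρ1, hρ2, hρ3⟩ := hρ
  obtain ⟨hν1, hν2, hν3⟩ := hν
  have hb01 : ∀ y z : g, b 0 y z = 0 := fun y z => (hb1 y z).map_zero
  have hb02 : ∀ x z : g, b x 0 z = 0 := fun x z => (hb2 x z).map_zero
  have hb03 : ∀ x y : g, b x y 0 = 0 := fun x y => (hb3 x y).map_zero
  have hρ01 : ∀ (y : g) (v : V), ρ 0 y v = 0 := fun y v => (hρ1 y v).map_zero
  have hρ02 : ∀ (x : g) (v : V), ρ x 0 v = 0 := fun x v => (hρ2 x v).map_zero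
  have hρ03 : ∀ x y : g, ρ x y 0 = 0 := fun x y => (hρ3 x y).map_zero
  have hν01 : ∀ u w : V, ν 0 u w = 0 := fun u w => (hν1 u w).map_zero
  have hν02 : ∀ (x : g) (w : V), ν x 0 w = 0 := fun x w => (hν2 x w).map_zero
  have hν03 : ∀ (x : g) (u : V), ν x u 0 = 0 := fun x u => (hν3 x u).map_zero
  have hα0 : α 0 = 0 := hαlin.map_zero
  have hA0 : A 0 = 0 := hA.map_zero
  show HomFJ (cbr3 b ρ ν) (mal3 α A) ↔ GenRepConds b α ρ ν A
  constructor
  · intro h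
    refine ⟨?_, ?_, ?_, ?_, ?_, ?_⟩
    · intro x1 x2 x3 x4 v
      have H := congrArg Prod.snd (h (x1, 0) (x2, 0) (x3, 0) (x4, 0) ((0 : g), v))
      simp only [cbr3, mal3, Prod.snd_add, hα0, hA0, hb01, hb02, hb03,
        hρ01, hρ02, hρ03, hν01, hν02, hν03, add_zero, zero_add] at H
      linear_combination (norm := abel) H + hρskew (b x1 x2 x4) (α x3) (A v)
    · intro x1 x2 x3 x4 v
      have H := congrArg Prod.snd (h (x4, 0) ((0 : g), v) (x1, 0) (x2, 0) (x3, 0))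
      simp only [cbr3, mal3, Prod.snd_add, hα0, hA0, hb01, hb02, hb03,
        hρ01, hρ02, hρ03, hν01, hν02, hν03, add_zero, zero_add] at H
      linear_combination (norm := abel) H
    · intro x1 x2 x3 v1 v2
      have H := congrArg Prod.snd (h (x1, 0) (x2, 0) (x3, 0) ((0 : g), v1) ((0 : g), v2))
      simp only [cbr3, mal3, Prod.snd_add, hα0, hA0, hb01, hb02, hb03,
        hρ01, hρ02, hρ03, hν01, hν02, hν03, add_zero, zero_add] at H
      linear_combination (norm := abel) H
    · intro x1 x2 x3 v1 v2
      have H := congrArg Prod.snd (h (x1, 0) ((0 : g), v1) (x2, 0) (x3, 0) ((0 : g), v2))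
      simp only [cbr3, mal3, Prod.snd_add, hα0, hA0, hb01, hb02, hb03,
        hρ01, hρ02, hρ03, hν01, hν02, hν03, add_zero, zero_add] at H
      linear_combination (norm := abel) H
    · intro x1 x2 v1 v2 v3
      have H := congrArg Prod.snd (h (x1, 0) ((0 : g), v1) (x2, 0) ((0 : g), v2) ((0 : g), v3))
      simp only [cbr3, mal3, Prod.snd_add, hα0, hA0, hb01, hb02, hb03,
        hρ01, hρ02, hρ03, hν01, hν02, hν03, add_zero, zero_add] at H
      linear_combination (norm := abel) H
    · intro x1 x2 v1 v2 v3
      have H := congrArg Prod.snd (h ((0 : g), v1) ((0 : g), v2) (x1, 0) (x2, 0) ((0 : g), v3))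
      simp only [cbr3, mal3, Prod.snd_add, hα0, hA0, hb01, hb02, hb03,
        hρ01, hρ02, hρ03, hν01, hν02, hν03, add_zero, zero_add] at H
      linear_combination (norm := abel) - H - hνskew (α x2) (ν x1 v1 v2) (A v3)
  · intro hGR
    obtain ⟨gr1, gr2, gr3, gr4, gr5, gr6⟩ := hGR
    have hba1 : ∀ (x x' y z : g), b (x + x') y z = b x y z + b x' y z :=
      fun x x' y z => (hb1 y z).map_add x x'
    have hba2 : ∀ (x y y' z : g), b x (y + y') z = b x y z + b x y' z :=
      fun x y y' z => (hb2 x z).map_add y y'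
    have hba3 : ∀ (x y z z' : g), b x y (z + z') = b x y z + b x y z' :=
      fun x y z z' => (hb3 x y).map_add z z'
    have hρa1 : ∀ (x x' y : g) (v : V), ρ (x + x') y v = ρ x y v + ρ x' y v :=
      fun x x' y v => (hρ1 y v).map_add x x'
    have hρa2 : ∀ (x y y' : g) (v : V), ρ x (y + y') v = ρ x y v + ρ x y' v :=
      fun x y y' v => (hρ2 x v).map_add y y'
    have hρa3 : ∀ (x y : g) (v v' : V), ρ x y (v + v') = ρ x y v + ρ x y v' :=
      fun x y v v' => (hρ3 x y).map_add v v'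
    have hνa1 : ∀ (x x' : g) (u w : V), ν (x + x') u w = ν x u w + ν x' u w :=
      fun x x' u w => (hν1 u w).map_add x x'
    have hνa2 : ∀ (x : g) (u u' w : V), ν x (u + u') w = ν x u w + ν x u' w :=
      fun x u u' w => (hν2 x w).map_add u u'
    have hνa3 : ∀ (x : g) (u w w' : V), ν x u (w + w') = ν x u w + ν x u w' :=
      fun x u w w' => (hν3 x u).map_add w w'
    have hαa : ∀ x x' : g, α (x + x') = α x + α x' := fun x x' => hαlin.map_add x x'
    have hAa : ∀ v v' : V, A (v + v') = A v + A v' := fun v v' => hA.map_add v v'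
    have hbn1 : ∀ x y z : g, b (-x) y z = - b x y z := fun x y z => (hb1 y z).map_neg x
    have hbn2 : ∀ x y z : g, b x (-y) z = - b x y z := fun x y z => (hb2 x z).map_neg y
    have hbn3 : ∀ x y z : g, b x y (-z) = - b x y z := fun x y z => (hb3 x y).map_neg z
    have hρn1 : ∀ (x y : g) (v : V), ρ (-x) y v = - ρ x y v := fun x y v => (hρ1 y v).map_neg x
    have hρn2 : ∀ (x y : g) (v : V), ρ x (-y) v = - ρ x y v := fun x y v => (hρ2 x v).map_neg y
    have hρn3 : ∀ (x y : g) (v : V), ρ x y (-v) = - ρ x y v := fun x y v => (hρ3 x y).map_neg v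
    have hνn1 : ∀ (x : g) (u w : V), ν (-x) u w = - ν x u w := fun x u w => (hν1 u w).map_neg x
    have hνn2 : ∀ (x : g) (u w : V), ν x (-u) w = - ν x u w := fun x u w => (hν2 x w).map_neg u
    have hνn3 : ∀ (x : g) (u w : V), ν x u (-w) = - ν x u w := fun x u w => (hν3 x u).map_neg w
    have hc12 : ∀ p q r : g × V, cbr3 b ρ ν q p r = - cbr3 b ρ ν p q r := by
      intro p q r
      apply Prod.ext
      · simp only [cbr3, Prod.fst_neg]
        exact hbskew.1 p.1 q.1 r.1
      · simp only [cbr3, Prod.snd_neg]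
        linear_combination (norm := abel) hρskew p.1 q.1 r.2 + hρskew q.1 r.1 p.2 +
          hρskew r.1 p.1 q.2 + hνskew p.1 q.2 r.2 + hνskew q.1 r.2 p.2 + hνskew r.1 p.2 q.2
    have hc23 : ∀ p q r : g × V, cbr3 b ρ ν p r q = - cbr3 b ρ ν p q r := by
      intro p q r
      apply Prod.ext
      · simp only [cbr3, Prod.fst_neg]
        exact hbskew.2 p.1 q.1 r.1
      · simp only [cbr3, Prod.snd_neg]
        linear_combination (norm := abel) hρskew p.1 q.1 r.2 + hρskew q.1 r.1 p.2 +
          hρskew r.1 p.1 q.2 + hνskew p.1 q.2 r.2 + hνskew q.1 r.2 p.2 + hνskew r.1 p.2 q.2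
    have hcn1 : ∀ p q r : g × V, cbr3 b ρ ν (-p) q r = - cbr3 b ρ ν p q r := by
      intro p q r
      apply Prod.ext
      · simp only [cbr3, Prod.fst_neg]
        exact hbn1 p.1 q.1 r.1
      · simp only [cbr3, Prod.fst_neg, Prod.snd_neg, hρn1, hρn2, hρn3, hνn1, hνn2, hνn3]
        abel
    have hcn2 : ∀ p q r : g × V, cbr3 b ρ ν p (-q) r = - cbr3 b ρ ν p q r := by
      intro p q r
      apply Prod.ext
      · simp only [cbr3, Prod.fst_neg]
        exact hbn2 p.1 q.1 r.1
      · simp only [cbr3, Prod.fst_neg, Prod.snd_neg, hρn1, hρn2, hρn3, hνn1, hνn2, hνn3]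
        abel
    have hcn3 : ∀ p q r : g × V, cbr3 b ρ ν p q (-r) = - cbr3 b ρ ν p q r := by
      intro p q r
      apply Prod.ext
      · simp only [cbr3, Prod.fst_neg]
        exact hbn3 p.1 q.1 r.1
      · simp only [cbr3, Prod.fst_neg, Prod.snd_neg, hρn1, hρn2, hρn3, hνn1, hνn2, hνn3]
        abel
    have hsuv : ∀ u v x y z : g × V,
        Ed3 b α ρ ν A v u x y z = - Ed3 b α ρ ν A u v x y z := by
      intro u v x y z
      simp only [Ed3]
      rw [hc12 (mal3 α A u) (mal3 α A v) (cbr3 b ρ ν x y z), hc12 u v x, hc12 u v y,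
        hc12 u v z, hcn1 (cbr3 b ρ ν u v x) (mal3 α A y) (mal3 α A z),
        hcn2 (mal3 α A x) (cbr3 b ρ ν u v y) (mal3 α A z),
        hcn3 (mal3 α A x) (mal3 α A y) (cbr3 b ρ ν u v z)]
      simp only [Prod.snd_neg]
      abel
    have hsxy : ∀ u v x y z : g × V,
        Ed3 b α ρ ν A u v y x z = - Ed3 b α ρ ν A u v x y z := by
      intro u v x y z
      simp only [Ed3]
      rw [hc12 x y z, hcn3 (mal3 α A u) (mal3 α A v) (cbr3 b ρ ν x y z),
        hc12 (mal3 α A x) (cbr3 b ρ ν u v y) (mal3 α A z),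
        hc12 (cbr3 b ρ ν u v x) (mal3 α A y) (mal3 α A z),
        hc12 (mal3 α A x) (mal3 α A y) (cbr3 b ρ ν u v z)]
      simp only [Prod.snd_neg]
      abel
    have hsyz : ∀ u v x y z : g × V,
        Ed3 b α ρ ν A u v x z y = - Ed3 b α ρ ν A u v x y z := by
      intro u v x y z
      simp only [Ed3]
      rw [hc23 x y z, hcn3 (mal3 α A u) (mal3 α A v) (cbr3 b ρ ν x y z),
        hc23 (cbr3 b ρ ν u v x) (mal3 α A y) (mal3 α A z),
        hc23 (mal3 α A x) (mal3 α A y) (cbr3 b ρ ν u v z),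
        hc23 (mal3 α A x) (cbr3 b ρ ν u v y) (mal3 α A z)]
      simp only [Prod.snd_neg]
      abel
    -- canonical pure cases
    have M01 : ∀ a c d e f : g,
        Ed3 b α ρ ν A (a, 0) (c, 0) (d, 0) (e, 0) (f, 0) = 0 := by
      intro a c d e f
      simp only [Ed3, cbr3, mal3, hα0, hA0, hb01, hb02, hb03, hρ01, hρ02, hρ03,
        hν01, hν02, hν03, add_zero, zero_add, sub_self]
    have M02 : ∀ (a c d e : g) (w : V),
        Ed3 b α ρ ν A (a, 0) (c, 0) (d, 0) (e, 0) ((0 : g), w) = 0 := by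
      intro a c d e w
      simp only [Ed3, cbr3, mal3, hα0, hA0, hb01, hb02, hb03, hρ01, hρ02, hρ03,
        hν01, hν02, hν03, add_zero, zero_add]
      linear_combination (norm := abel) gr1 a c d e w - hρskew (b a c e) (α d) (A w)
    have M05 : ∀ (a c d : g) (s t : V),
        Ed3 b α ρ ν A (a, 0) (c, 0) (d, 0) ((0 : g), s) ((0 : g), t) = 0 := by
      intro a c d s t
      simp only [Ed3, cbr3, mal3, hα0, hA0, hb01, hb02, hb03, hρ01, hρ02, hρ03,
        hν01, hν02, hν03, add_zero, zero_add]
      linear_combination (norm := abel) gr3 a c d s t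
    have M08 : ∀ (a c : g) (s t w : V),
        Ed3 b α ρ ν A (a, 0) (c, 0) ((0 : g), s) ((0 : g), t) ((0 : g), w) = 0 := by
      intro a c s t w
      simp only [Ed3, cbr3, mal3, hα0, hA0, hb01, hb02, hb03, hρ01, hρ02, hρ03,
        hν01, hν02, hν03, add_zero, zero_add, sub_self]
    have M09 : ∀ (a d e f : g) (s : V),
        Ed3 b α ρ ν A (a, 0) ((0 : g), s) (d, 0) (e, 0) (f, 0) = 0 := by
      intro a d e f s
      simp only [Ed3, cbr3, mal3, hα0, hA0, hb01, hb02, hb03, hρ01, hρ02, hρ03,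
        hν01, hν02, hν03, add_zero, zero_add]
      linear_combination (norm := abel) gr2 d e f a s
    have M10 : ∀ (a d e : g) (s t : V),
        Ed3 b α ρ ν A (a, 0) ((0 : g), s) (d, 0) (e, 0) ((0 : g), t) = 0 := by
      intro a d e s t
      simp only [Ed3, cbr3, mal3, hα0, hA0, hb01, hb02, hb03, hρ01, hρ02, hρ03,
        hν01, hν02, hν03, add_zero, zero_add]
      linear_combination (norm := abel) gr4 a d e s t
    have M13 : ∀ (a d : g) (s t w : V),
        Ed3 b α ρ ν A (a, 0) ((0 : g), s) (d, 0) ((0 : g), t) ((0 : g), w) = 0 := by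
      intro a d s t w
      simp only [Ed3, cbr3, mal3, hα0, hA0, hb01, hb02, hb03, hρ01, hρ02, hρ03,
        hν01, hν02, hν03, add_zero, zero_add]
      linear_combination (norm := abel) gr5 a d s t w
    have M16 : ∀ (a : g) (s t w r : V),
        Ed3 b α ρ ν A (a, 0) ((0 : g), s) ((0 : g), t) ((0 : g), w) ((0 : g), r) = 0 := by
      intro a s t w r
      simp only [Ed3, cbr3, mal3, hα0, hA0, hb01, hb02, hb03, hρ01, hρ02, hρ03,
        hν01, hν02, hν03, add_zero, zero_add, sub_self]
    have M25 : ∀ (d e f : g) (s t : V),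
        Ed3 b α ρ ν A ((0 : g), s) ((0 : g), t) (d, 0) (e, 0) (f, 0) = 0 := by
      intro d e f s t
      have hq1 : ν (α f) (ρ d e s) (A t) = - ν (α f) (A t) (ρ d e s) :=
        hνskew (α f) (A t) (ρ d e s)
      have hm1 : ν (α e) (A t) (ρ d f s) = - ν (α e) (A t) (ρ f d s) := by
        rw [hρskew f d s, hνn3]
      have hm2 : ν (α d) (ρ e f s) (A t) = - ν (α d) (A t) (ρ e f s) :=
        hνskew (α d) (A t) (ρ e f s)
      have hm3 : ν (α e) (A s) (ρ d f t) = - ν (α e) (A s) (ρ f d t) := by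
        rw [hρskew f d t, hνn3]
      have hm4 : ν (α d) (ρ e f t) (A s) = - ν (α d) (A s) (ρ e f t) :=
        hνskew (α d) (A s) (ρ e f t)
      have hm5 : ρ (α d) (α e) (ν f t s) = - ρ (α d) (α e) (ν f s t) := by
        rw [hνskew f s t, hρn3]
      have hm6 : ν (α f) (A s) (ρ e d t) = - ν (α f) (A s) (ρ d e t) := by
        rw [hρskew d e t, hνn3]
      have hm7 : ν (α e) (ρ f d t) (A s) = - ν (α e) (A s) (ρ f d t) :=
        hνskew (α e) (A s) (ρ f d t)
      have hm8 : ρ (α e) (α f) (ν d t s) = - ρ (α e) (α f) (ν d s t) := by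
        rw [hνskew d s t, hρn3]
      have hm9 : ν (α d) (A s) (ρ f e t) = - ν (α d) (A s) (ρ e f t) := by
        rw [hρskew e f t, hνn3]
      have hm10 : ν (α f) (ρ d e t) (A s) = - ν (α f) (A s) (ρ d e t) :=
        hνskew (α f) (A s) (ρ d e t)
      have hm11 : ρ (α f) (α d) (ν e t s) = - ρ (α f) (α d) (ν e s t) := by
        rw [hνskew e s t, hρn3]
      simp only [Ed3, cbr3, mal3, hα0, hA0, hb01, hb02, hb03, hρ01, hρ02, hρ03,
        hν01, hν02, hν03, add_zero, zero_add]
      linear_combination (norm := abel)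
        - gr3 d e f s t - hq1
        - gr4 d e f t s - hm6 - hm7 - hm8
        - gr4 e f d t s - hm9 - hm10 - hm11
        + gr4 f d e s t + hm1 + hm2
        + gr4 f d e t s + hm3 + hm4 + hm5
    have M26 : ∀ (d e : g) (s t w : V),
        Ed3 b α ρ ν A ((0 : g), s) ((0 : g), t) (d, 0) (e, 0) ((0 : g), w) = 0 := by
      intro d e s t w
      simp only [Ed3, cbr3, mal3, hα0, hA0, hb01, hb02, hb03, hρ01, hρ02, hρ03,
        hν01, hν02, hν03, add_zero, zero_add]
      linear_combination (norm := abel) - hνskew (α e) (ν d s t) (A w) - gr6 d e s t w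
    have M29 : ∀ (d : g) (s t w r : V),
        Ed3 b α ρ ν A ((0 : g), s) ((0 : g), t) (d, 0) ((0 : g), w) ((0 : g), r) = 0 := by
      intro d s t w r
      simp only [Ed3, cbr3, mal3, hα0, hA0, hb01, hb02, hb03, hρ01, hρ02, hρ03,
        hν01, hν02, hν03, add_zero, zero_add, sub_self]
    have M32 : ∀ (s t w r q : V),
        Ed3 b α ρ ν A ((0 : g), s) ((0 : g), t) ((0 : g), w) ((0 : g), r) ((0 : g), q) = 0 := by
      intro s t w r q
      simp only [Ed3, cbr3, mal3, hα0, hA0, hb01, hb02, hb03, hρ01, hρ02, hρ03,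
        hν01, hν02, hν03, add_zero, zero_add, sub_self]
    -- permuted pure cases
    have M03 : ∀ (a c d e : g) (w : V),
        Ed3 b α ρ ν A (a, 0) (c, 0) (d, 0) ((0 : g), w) (e, 0) = 0 := by
      intro a c d e w
      rw [hsyz (a, 0) (c, 0) (d, 0) (e, 0) ((0 : g), w)]
      simp only [M02, neg_zero]
    have M04 : ∀ (a c d e : g) (w : V),
        Ed3 b α ρ ν A (a, 0) (c, 0) ((0 : g), w) (d, 0) (e, 0) = 0 := by
      intro a c d e w
      rw [hsxy (a, 0) (c, 0) (d, 0) ((0 : g), w) (e, 0)]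
      simp only [M03, neg_zero]
    have M06 : ∀ (a c d : g) (s t : V),
        Ed3 b α ρ ν A (a, 0) (c, 0) ((0 : g), s) (d, 0) ((0 : g), t) = 0 := by
      intro a c d s t
      rw [hsxy (a, 0) (c, 0) (d, 0) ((0 : g), s) ((0 : g), t)]
      simp only [M05, neg_zero]
    have M07 : ∀ (a c d : g) (s t : V),
        Ed3 b α ρ ν A (a, 0) (c, 0) ((0 : g), s) ((0 : g), t) (d, 0) = 0 := by
      intro a c d s t
      rw [hsyz (a, 0) (c, 0) ((0 : g), s) (d, 0) ((0 : g), t)]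
      simp only [M06, neg_zero]
    have M11 : ∀ (a d e : g) (s t : V),
        Ed3 b α ρ ν A (a, 0) ((0 : g), s) (d, 0) ((0 : g), t) (e, 0) = 0 := by
      intro a d e s t
      rw [hsyz (a, 0) ((0 : g), s) (d, 0) (e, 0) ((0 : g), t)]
      simp only [M10, neg_zero]
    have M12 : ∀ (a d e : g) (s t : V),
        Ed3 b α ρ ν A (a, 0) ((0 : g), s) ((0 : g), t) (d, 0) (e, 0) = 0 := by
      intro a d e s t
      rw [hsxy (a, 0) ((0 : g), s) (d, 0) ((0 : g), t) (e, 0)]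
      simp only [M11, neg_zero]
    have M14 : ∀ (a d : g) (s t w : V),
        Ed3 b α ρ ν A (a, 0) ((0 : g), s) ((0 : g), t) (d, 0) ((0 : g), w) = 0 := by
      intro a d s t w
      rw [hsxy (a, 0) ((0 : g), s) (d, 0) ((0 : g), t) ((0 : g), w)]
      simp only [M13, neg_zero]
    have M15 : ∀ (a d : g) (s t w : V),
        Ed3 b α ρ ν A (a, 0) ((0 : g), s) ((0 : g), t) ((0 : g), w) (d, 0) = 0 := by
      intro a d s t w
      rw [hsyz (a, 0) ((0 : g), s) ((0 : g), t) (d, 0) ((0 : g), w)]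
      simp only [M14, neg_zero]
    have M27 : ∀ (d e : g) (s t w : V),
        Ed3 b α ρ ν A ((0 : g), s) ((0 : g), t) (d, 0) ((0 : g), w) (e, 0) = 0 := by
      intro d e s t w
      rw [hsyz ((0 : g), s) ((0 : g), t) (d, 0) (e, 0) ((0 : g), w)]
      simp only [M26, neg_zero]
    have M28 : ∀ (d e : g) (s t w : V),
        Ed3 b α ρ ν A ((0 : g), s) ((0 : g), t) ((0 : g), w) (d, 0) (e, 0) = 0 := by
      intro d e s t w
      rw [hsxy ((0 : g), s) ((0 : g), t) (d, 0) ((0 : g), w) (e, 0)]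
      simp only [M27, neg_zero]
    have M30 : ∀ (d : g) (s t w r : V),
        Ed3 b α ρ ν A ((0 : g), s) ((0 : g), t) ((0 : g), w) (d, 0) ((0 : g), r) = 0 := by
      intro d s t w r
      rw [hsxy ((0 : g), s) ((0 : g), t) (d, 0) ((0 : g), w) ((0 : g), r)]
      simp only [M29, neg_zero]
    have M31 : ∀ (d : g) (s t w r : V),
        Ed3 b α ρ ν A ((0 : g), s) ((0 : g), t) ((0 : g), w) ((0 : g), r) (d, 0) = 0 := by
      intro d s t w r
      rw [hsyz ((0 : g), s) ((0 : g), t) ((0 : g), w) (d, 0) ((0 : g), r)]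
      simp only [M30, neg_zero]
    have M17 : ∀ (a d e f : g) (s : V),
        Ed3 b α ρ ν A ((0 : g), s) (a, 0) (d, 0) (e, 0) (f, 0) = 0 := by
      intro a d e f s
      rw [hsuv (a, 0) ((0 : g), s) (d, 0) (e, 0) (f, 0)]
      simp only [M09, neg_zero]
    have M18 : ∀ (a d e : g) (s t : V),
        Ed3 b α ρ ν A ((0 : g), s) (a, 0) (d, 0) (e, 0) ((0 : g), t) = 0 := by
      intro a d e s t
      rw [hsuv (a, 0) ((0 : g), s) (d, 0) (e, 0) ((0 : g), t)]
      simp only [M10, neg_zero]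
    have M19 : ∀ (a d e : g) (s t : V),
        Ed3 b α ρ ν A ((0 : g), s) (a, 0) (d, 0) ((0 : g), t) (e, 0) = 0 := by
      intro a d e s t
      rw [hsuv (a, 0) ((0 : g), s) (d, 0) ((0 : g), t) (e, 0)]
      simp only [M11, neg_zero]
    have M20 : ∀ (a d e : g) (s t : V),
        Ed3 b α ρ ν A ((0 : g), s) (a, 0) ((0 : g), t) (d, 0) (e, 0) = 0 := by
      intro a d e s t
      rw [hsuv (a, 0) ((0 : g), s) ((0 : g), t) (d, 0) (e, 0)]
      simp only [M12, neg_zero]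
    have M21 : ∀ (a d : g) (s t w : V),
        Ed3 b α ρ ν A ((0 : g), s) (a, 0) (d, 0) ((0 : g), t) ((0 : g), w) = 0 := by
      intro a d s t w
      rw [hsuv (a, 0) ((0 : g), s) (d, 0) ((0 : g), t) ((0 : g), w)]
      simp only [M13, neg_zero]
    have M22 : ∀ (a d : g) (s t w : V),
        Ed3 b α ρ ν A ((0 : g), s) (a, 0) ((0 : g), t) (d, 0) ((0 : g), w) = 0 := by
      intro a d s t w
      rw [hsuv (a, 0) ((0 : g), s) ((0 : g), t) (d, 0) ((0 : g), w)]
      simp only [M14, neg_zero]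
    have M23 : ∀ (a d : g) (s t w : V),
        Ed3 b α ρ ν A ((0 : g), s) (a, 0) ((0 : g), t) ((0 : g), w) (d, 0) = 0 := by
      intro a d s t w
      rw [hsuv (a, 0) ((0 : g), s) ((0 : g), t) ((0 : g), w) (d, 0)]
      simp only [M15, neg_zero]
    have M24 : ∀ (a : g) (s t w r : V),
        Ed3 b α ρ ν A ((0 : g), s) (a, 0) ((0 : g), t) ((0 : g), w) ((0 : g), r) = 0 := by
      intro a s t w r
      rw [hsuv (a, 0) ((0 : g), s) ((0 : g), t) ((0 : g), w) ((0 : g), r)]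
      simp only [M16, neg_zero]
    -- additivity of the defect
    have hEa1 : ∀ p p' q r s' t' : g × V,
        Ed3 b α ρ ν A (p + p') q r s' t' =
          Ed3 b α ρ ν A p q r s' t' + Ed3 b α ρ ν A p' q r s' t' := by
      intro p p' q r s' t'
      simp only [Ed3, cbr3, mal3, Prod.fst_add, Prod.snd_add, hba1, hba2, hba3,
        hρa1, hρa2, hρa3, hνa1, hνa2, hνa3, hαa, hAa]
      abel
    have hEa2 : ∀ p q q' r s' t' : g × V,
        Ed3 b α ρ ν A p (q + q') r s' t' =
          Ed3 b α ρ ν A p q r s' t' + Ed3 b α ρ ν A p q' r s' t' := by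
      intro p q q' r s' t'
      simp only [Ed3, cbr3, mal3, Prod.fst_add, Prod.snd_add, hba1, hba2, hba3,
        hρa1, hρa2, hρa3, hνa1, hνa2, hνa3, hαa, hAa]
      abel
    have hEa3 : ∀ p q r r' s' t' : g × V,
        Ed3 b α ρ ν A p q (r + r') s' t' =
          Ed3 b α ρ ν A p q r s' t' + Ed3 b α ρ ν A p q r' s' t' := by
      intro p q r r' s' t'
      simp only [Ed3, cbr3, mal3, Prod.fst_add, Prod.snd_add, hba1, hba2, hba3,
        hρa1, hρa2, hρa3, hνa1, hνa2, hνa3, hαa, hAa]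
      abel
    have hEa4 : ∀ p q r s' s'' t' : g × V,
        Ed3 b α ρ ν A p q r (s' + s'') t' =
          Ed3 b α ρ ν A p q r s' t' + Ed3 b α ρ ν A p q r s'' t' := by
      intro p q r s' s'' t'
      simp only [Ed3, cbr3, mal3, Prod.fst_add, Prod.snd_add, hba1, hba2, hba3,
        hρa1, hρa2, hρa3, hνa1, hνa2, hνa3, hαa, hAa]
      abel
    have hEa5 : ∀ p q r s' t' t'' : g × V,
        Ed3 b α ρ ν A p q r s' (t' + t'') =
          Ed3 b α ρ ν A p q r s' t' + Ed3 b α ρ ν A p q r s' t'' := by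
      intro p q r s' t' t''
      simp only [Ed3, cbr3, mal3, Prod.fst_add, Prod.snd_add, hba1, hba2, hba3,
        hρa1, hρa2, hρa3, hνa1, hνa2, hνa3, hαa, hAa]
      abel
    have hkey : ∀ u v x y z : g × V, Ed3 b α ρ ν A u v x y z = 0 := by
      intro u v x y z
      obtain ⟨u1, u2⟩ := u
      obtain ⟨v1, v2⟩ := v
      obtain ⟨x1, x2⟩ := x
      obtain ⟨y1, y2⟩ := y
      obtain ⟨z1, z2⟩ := z
      rw [show ((u1, u2) : g × V) = (u1, 0) + ((0 : g), u2) by simp,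
        show ((v1, v2) : g × V) = (v1, 0) + ((0 : g), v2) by simp,
        show ((x1, x2) : g × V) = (x1, 0) + ((0 : g), x2) by simp,
        show ((y1, y2) : g × V) = (y1, 0) + ((0 : g), y2) by simp,
        show ((z1, z2) : g × V) = (z1, 0) + ((0 : g), z2) by simp]
      simp only [hEa1, hEa2, hEa3, hEa4, hEa5]
      simp only [M01, M02, M03, M04, M05, M06, M07, M08, M09, M10, M11, M12, M13, M14,
        M15, M16, M17, M18, M19, M20, M21, M22, M23, M24, M25, M26, M27, M28, M29, M30,
        M31, M32, add_zero, zero_add]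
    unfold HomFJ
    intro u v x y z
    have hz := hkey u v x y z
    apply Prod.ext
    · simp only [cbr3, mal3, Prod.fst_add]
      exact hbFJ u.1 v.1 x.1 y.1 z.1
    · simp only [Prod.snd_add]
      rw [← sub_eq_zero]
      exact hz
end

section
/- Let (g,[·,·,·],α) be a multiplicative 3-Hom-Lie algebra and (V;ρ,ν,A) a generalized representation of g (equations (GR1)–(GR6) hold). Let β: g → g be a morphism of the 3-Hom-Lie algebra g (β([x,y,z]) = [β(x),β(y),β(z)] and β∘α = α∘β) and B: V → V a linear map such that B∘ρ(x1,x2) = ρ(β(x1),β(x2))∘B, B(ν(x)(u,v)) = ν(β(x))(B(u),B(v)), and B∘A = A∘B for all x,x1,x2 ∈ g, u,v ∈ V. Define ρ̃ := B∘ρ and ν̃(x) := B∘ν(x). Then (V; ρ̃, ν̃, B∘A) is a generalized representation of the multiplicative 3-Hom-Lie algebra (g, [·,·,·]_β, β∘α), where [x,y,z]_β := [β(x),β(y),β(z)]; that is, equations (GR1)–(GR6) hold with bracket [·,·,·]_β, twist map β∘α, and endomorphism B∘A in place of [·,·,·], α and A. -/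
/-- twisting a generalized representation `(V; ρ, ν, A)` of
`(g, b, α)` along a morphism `β` of `g` and a compatible linear map `B` yields
a generalized representation `(V; B∘ρ, B∘ν, B∘A)` of `(g, [·,·,·]_β, β∘α)`. -/
theorem twist_genRep_along_morphism
    {K : Type*} [Field K] [CharZero K]
    {g V : Type*} [AddCommGroup g] [Module K g] [AddCommGroup V] [Module K V]
    (b : g → g → g → g) (α : g → g) (hg : IsMult3HomLie K b α)
    (ρ : g → g → V → V) (ν : g → V → V → V) (A : V → V)
    (hrep : IsGenRep K b α ρ ν A)
    (β : g → g) (hβ : IsLinearMap K β)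
    (hβb : ∀ x y z, β (b x y z) = b (β x) (β y) (β z))
    (hβα : ∀ x, β (α x) = α (β x))
    (B : V → V) (hB : IsLinearMap K B)
    (hBρ : ∀ x y v, B (ρ x y v) = ρ (β x) (β y) (B v))
    (hBν : ∀ x u w, B (ν x u w) = ν (β x) (B u) (B w))
    (hBA : ∀ v, B (A v) = A (B v)) :
    IsGenRep K (fun x y z => b (β x) (β y) (β z)) (fun x => β (α x))
      (fun x y v => B (ρ x y v)) (fun x u w => B (ν x u w)) (fun v => B (A v)) := by
  obtain ⟨hbil, hskew, hnu, hskewnu, hA, hGR1, hGR2, hGR3, hGR4, hGR5, hGR6⟩ := hrep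
  refine ⟨⟨fun y v => ⟨fun a c => ?_, fun c a => ?_⟩,
          fun x v => ⟨fun a c => ?_, fun c a => ?_⟩,
          fun x y => ⟨fun a c => ?_, fun c a => ?_⟩⟩,
        fun x y v => ?_,
        ⟨fun u w => ⟨fun a c => ?_, fun c a => ?_⟩,
          fun x w => ⟨fun a c => ?_, fun c a => ?_⟩,
          fun x u => ⟨fun a c => ?_, fun c a => ?_⟩⟩,
        fun x u w => ?_,
        ⟨fun a c => ?_, fun c a => ?_⟩,
        fun x1 x2 x3 x4 v => ?_, fun x1 x2 x3 x4 v => ?_,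
        fun x1 x2 x3 v1 v2 => ?_, fun x1 x2 x3 v1 v2 => ?_,
        fun x1 x2 v1 v2 v3 => ?_, fun x1 x2 v1 v2 v3 => ?_⟩
  · simp only [(hbil.1 y v).map_add, hB.map_add]
  · simp only [(hbil.1 y v).map_smul, hB.map_smul]
  · simp only [(hbil.2.1 x v).map_add, hB.map_add]
  · simp only [(hbil.2.1 x v).map_smul, hB.map_smul]
  · simp only [(hbil.2.2 x y).map_add, hB.map_add]
  · simp only [(hbil.2.2 x y).map_smul, hB.map_smul]
  · simp only [hskew x y v, hB.map_neg]
  · simp only [(hnu.1 u w).map_add, hB.map_add]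
  · simp only [(hnu.1 u w).map_smul, hB.map_smul]
  · simp only [(hnu.2.1 x w).map_add, hB.map_add]
  · simp only [(hnu.2.1 x w).map_smul, hB.map_smul]
  · simp only [(hnu.2.2 x u).map_add, hB.map_add]
  · simp only [(hnu.2.2 x u).map_smul, hB.map_smul]
  · simp only [hskewnu x u w, hB.map_neg]
  · simp only [hA.map_add, hB.map_add]
  · simp only [hA.map_smul, hB.map_smul]
  · simp only [hBρ, hBν, hBA, hβb, hβα]
    exact hGR1 (β (β x1)) (β (β x2)) (β (β x3)) (β (β x4)) (B (B v))
  · simp only [hBρ, hBν, hBA, hβb, hβα]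
    exact hGR2 (β (β x1)) (β (β x2)) (β (β x3)) (β (β x4)) (B (B v))
  · simp only [hBρ, hBν, hBA, hβb, hβα]
    exact hGR3 (β (β x1)) (β (β x2)) (β (β x3)) (B (B v1)) (B (B v2))
  · simp only [hBρ, hBν, hBA, hβb, hβα]
    exact hGR4 (β (β x1)) (β (β x2)) (β (β x3)) (B (B v1)) (B (B v2))
  · simp only [hBρ, hBν, hBA, hβb, hβα]
    exact hGR5 (β (β x1)) (β (β x2)) (B (B v1)) (B (B v2)) (B (B v3))
  · simp only [hBρ, hBν, hBA, hβb, hβα]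
    exact hGR6 (β (β x1)) (β (β x2)) (B (B v1)) (B (B v2)) (B (B v3))
end

section
/- Let (g,[·,·,·]) be a 3-Lie algebra and (V,ρ,ν) a generalized representation of the 3-Lie algebra g, i.e. equations (GR1)–(GR6) hold with α = id_g and A = id_V. Let α: g → g be a 3-Lie algebra morphism and A: V → V a linear map such that A∘ρ(x1,x2) = ρ(α(x1),α(x2))∘A and A(ν(x)(v1,v2)) = ν(α(x))(A(v1),A(v2)) for all x,x1,x2 ∈ g and v1,v2 ∈ V. Then (V, ρ̃ := A∘ρ, ν̃ := A∘ν, A) is a generalized representation of the multiplicative 3-Hom-Lie algebra (g, [·,·,·]_α := α∘[·,·,·], α); that is, equations (GR1)–(GR6) hold for ρ̃, ν̃ with bracket α∘[·,·,·], twist map α, and endomorphism A. -/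
/-- twisting a generalized representation `(V, ρ, ν)` of a 3-Lie
algebra along a morphism `α` and a compatible linear map `A` yields a
generalized representation `(V, A∘ρ, A∘ν, A)` of `(g, α ∘ [·,·,·], α)`. -/
theorem twist_genRep_of_3Lie
    {K : Type*} [Field K] [CharZero K]
    {g V : Type*} [AddCommGroup g] [Module K g] [AddCommGroup V] [Module K V]
    (b : g → g → g → g)
    (hb : IsTrilinearMap K b) (hbskew : IsSkewTri b) (hFJ : HomFJ b (id : g → g))
    (ρ : g → g → V → V) (hρ : IsBilinearRep K ρ) (hρskew : IsSkewRep ρ)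
    (ν : g → V → V → V) (hν : IsNuMap K ν) (hνskew : IsSkewNu ν)
    (hGR : GenRepConds b (id : g → g) ρ ν (id : V → V))
    (α : g → g) (hα : IsLinearMap K α)
    (hαb : ∀ x y z, α (b x y z) = b (α x) (α y) (α z))
    (A : V → V) (hA : IsLinearMap K A)
    (hAρ : ∀ x1 x2 v, A (ρ x1 x2 v) = ρ (α x1) (α x2) (A v))
    (hAν : ∀ x v1 v2, A (ν x v1 v2) = ν (α x) (A v1) (A v2)) :
    IsGenRep K (fun x y z => α (b x y z)) α
      (fun x y v => A (ρ x y v)) (fun x u w => A (ν x u w)) A := by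
  obtain ⟨hρ1, hρ2, hρ3⟩ := hρ
  obtain ⟨hν1, hν2, hν3⟩ := hν
  obtain ⟨g1, g2, g3, g4, g5, g6⟩ := hGR
  simp only [id] at g1 g2 g3 g4 g5 g6
  refine ⟨⟨?_, ?_, ?_⟩, ?_, ⟨?_, ?_, ?_⟩, ?_, hA, ?_, ?_, ?_, ?_, ?_, ?_⟩
  · exact fun y v => ⟨fun a c => by dsimp only; rw [(hρ1 y v).map_add, hA.map_add],
      fun c a => by dsimp only; rw [(hρ1 y v).map_smul, hA.map_smul]⟩
  · exact fun x v => ⟨fun a c => by dsimp only; rw [(hρ2 x v).map_add, hA.map_add],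
      fun c a => by dsimp only; rw [(hρ2 x v).map_smul, hA.map_smul]⟩
  · exact fun x y => ⟨fun a c => by dsimp only; rw [(hρ3 x y).map_add, hA.map_add],
      fun c a => by dsimp only; rw [(hρ3 x y).map_smul, hA.map_smul]⟩
  · exact fun x y v => by dsimp only; rw [hρskew, hA.map_neg]
  · exact fun u w => ⟨fun a c => by dsimp only; rw [(hν1 u w).map_add, hA.map_add],
      fun c a => by dsimp only; rw [(hν1 u w).map_smul, hA.map_smul]⟩
  · exact fun x w => ⟨fun a c => by dsimp only; rw [(hν2 x w).map_add, hA.map_add],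
      fun c a => by dsimp only; rw [(hν2 x w).map_smul, hA.map_smul]⟩
  · exact fun x u => ⟨fun a c => by dsimp only; rw [(hν3 x u).map_add, hA.map_add],
      fun c a => by dsimp only; rw [(hν3 x u).map_smul, hA.map_smul]⟩
  · exact fun x u w => by dsimp only; rw [hνskew, hA.map_neg]
  · intro x1 x2 x3 x4 v
    simp only [← hAρ, ← hAν, ← hA.map_add, ← hA.map_sub]
    exact congrArg A (congrArg A (g1 x1 x2 x3 x4 v))
  · intro x1 x2 x3 x4 v
    simp only [← hAρ, ← hAν, ← hA.map_add, ← hA.map_sub]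
    exact congrArg A (congrArg A (g2 x1 x2 x3 x4 v))
  · intro x1 x2 x3 v1 v2
    simp only [← hAρ, ← hAν, ← hA.map_add, ← hA.map_sub]
    exact congrArg A (congrArg A (g3 x1 x2 x3 v1 v2))
  · intro x1 x2 x3 v1 v2
    simp only [← hAρ, ← hAν, ← hA.map_add, ← hA.map_sub]
    exact congrArg A (congrArg A (g4 x1 x2 x3 v1 v2))
  · intro x1 x2 v1 v2 v3
    simp only [← hAρ, ← hAν, ← hA.map_add, ← hA.map_sub]
    exact congrArg A (congrArg A (g5 x1 x2 v1 v2 v3))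
  · intro x1 x2 v1 v2 v3
    simp only [← hAρ, ← hAν, ← hA.map_add, ← hA.map_sub]
    exact congrArg A (congrArg A (g6 x1 x2 v1 v2 v3))
end

section
/- Let g be a vector space over a field K of characteristic 0 with the zero ternary bracket (an abelian 3-Hom-Lie algebra) and α: g → g any linear map. Let (V,π,A) be a multiplicative Hom-Lie algebra: π: V×V → V bilinear skew-symmetric, A: V → V linear with A(π(u,v)) = π(A(u),A(v)), satisfying the Hom-Jacobi identity π(A(u),π(v,w)) + π(A(w),π(u,v)) + π(A(v),π(w,u)) = 0 for all u,v,w ∈ V. Let ξ: g → K be a linear functional such that ξ(α(x))ξ(y) = ξ(x)ξ(α(y)) for all x,y ∈ g (for instance ξ∘α = ξ). Define ρ = 0 and ν(x)(u,v) = ξ(x)·π(u,v). Then (V;ρ,ν,A) is a generalized representation of the multiplicative 3-Hom-Lie algebra (g, 0, α), i.e. equations (GR1)–(GR6) hold. -/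
/-- on an abelian 3-Hom-Lie algebra `(g, 0, α)`, given a
multiplicative Hom-Lie algebra `(V, π, A)` and a linear functional `ξ : g → K`
with `ξ(α x) ξ y = ξ x ξ(α y)`, the maps `ρ = 0` and `ν(x)(u,v) = ξ(x) • π(u,v)`
form a generalized representation `(V; ρ, ν, A)`. -/
theorem abelian_genRep_from_HomLie
    {K : Type*} [Field K] [CharZero K]
    {g V : Type*} [AddCommGroup g] [Module K g] [AddCommGroup V] [Module K V]
    (α : g → g) (hα : IsLinearMap K α)
    (π : V → V → V)
    (hπ1 : ∀ w, IsLinearMap K fun u => π u w) (hπ2 : ∀ u, IsLinearMap K (π u))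
    (hπskew : ∀ u w, π w u = - π u w)
    (A : V → V) (hA : IsLinearMap K A)
    (hAπ : ∀ u w, A (π u w) = π (A u) (A w))
    (hHomJacobi : ∀ u v w, π (A u) (π v w) + π (A w) (π u v) + π (A v) (π w u) = 0)
    (ξ : g → K) (hξ : IsLinearMap K ξ)
    (hξα : ∀ x y, ξ (α x) * ξ y = ξ x * ξ (α y)) :
    IsGenRep K (fun _ _ _ => (0 : g)) α
      (fun _ _ _ => (0 : V)) (fun x u w => ξ x • π u w) A := by
  have hπ0l : ∀ w, π 0 w = 0 := fun w => by
    have := (hπ1 w).map_smul 0 0; simpa using this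
  have hπ0r : ∀ u, π u 0 = 0 := fun u => by
    have := (hπ2 u).map_smul 0 0; simpa using this
  have hξ0 : ξ 0 = 0 := by have := hξ.map_smul 0 0; simpa using this
  refine ⟨⟨fun y v => ⟨by simp, by simp⟩, fun x v => ⟨by simp, by simp⟩,
      fun x y => ⟨by simp, by simp⟩⟩,
    fun x y v => by simp,
    ⟨fun u w => ⟨fun a b => by dsimp only; rw [hξ.map_add, add_smul], fun c a => by
        dsimp only; rw [hξ.map_smul, smul_assoc]⟩,
     fun x w => ⟨fun a b => by dsimp only; rw [(hπ1 w).map_add, smul_add], fun c a => by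
        dsimp only; rw [(hπ1 w).map_smul, smul_comm]⟩,
     fun x u => ⟨fun a b => by dsimp only; rw [(hπ2 u).map_add, smul_add], fun c a => by
        dsimp only; rw [(hπ2 u).map_smul, smul_comm]⟩⟩,
    fun x u w => by dsimp only; rw [hπskew, smul_neg],
    hA, ?_, ?_, ?_, ?_, ?_, ?_⟩
  · intro x1 x2 x3 x4 v; simp
  · intro x1 x2 x3 x4 v; simp
  · intro x1 x2 x3 v1 v2
    simp [hξ0, hπ0l, hπ0r]
  · intro x1 x2 x3 v1 v2
    simp [hξ0, hπ0l, hπ0r]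
  · intro x1 x2 v1 v2 v3
    have hkey : π (A v1) (π v2 v3) = π (π v1 v2) (A v3) + π (A v2) (π v1 v3) := by
      have h := hHomJacobi v1 v2 v3
      have h2 : π (A v3) (π v1 v2) = - π (π v1 v2) (A v3) := hπskew _ _
      have h3 : π (A v2) (π v3 v1) = - π (A v2) (π v1 v3) := by
        rw [hπskew v1 v3, (hπ2 (A v2)).map_neg]
      linear_combination (norm := abel) h - h2 - h3
    dsimp only
    rw [(hπ2 (A v1)).map_smul, (hπ1 (A v3)).map_smul, (hπ2 (A v2)).map_smul,
      smul_smul, smul_smul, smul_smul, hξα, hkey, smul_add, mul_comm]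
  · intro x1 x2 v1 v2 v3
    dsimp only
    rw [(hπ1 (A v3)).map_smul, (hπ1 (A v3)).map_smul, smul_smul, smul_smul,
      hξα, mul_comm]
end

section
/- Let (ĝ,[·,·,·]_ĝ,α̂) and (g,[·,·,·],α) be multiplicative 3-Hom-Lie algebras and p: ĝ → g a surjective morphism (p linear, p([a,b,c]_ĝ) = [p(a),p(b),p(c)], p∘α̂ = α∘p). Let V = ker(p) and assume V is abelian: [u,v,a]_ĝ = 0 for all u,v ∈ V, a ∈ ĝ. Note α̂(V) ⊆ V; let A := α̂|_V. Suppose σ: g → ĝ is a morphism of 3-Hom-Lie algebras with p∘σ = id_g and σ∘α = α̂∘σ (a split abelian extension). Define ρ(x,y)(u) = [σ(x),σ(y),u]_ĝ and ν(x)(u,v) = [σ(x),u,v]_ĝ for x,y ∈ g, u,v ∈ V. Then the linear map Φ: g⊕V → ĝ, Φ(x+u) = σ(x)+u, is a bijection satisfying Φ([e1,e2,e3]_{(ρ,ν)}) = [Φ(e1),Φ(e2),Φ(e3)]_ĝ for all e1,e2,e3 ∈ g⊕V and Φ∘(α⊕A) = α̂∘Φ, where [x1+v1, x2+v2, x3+v3]_{(ρ,ν)}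 = [x1,x2,x3] + ρ(x1,x2)v3 + ρ(x3,x1)v2 + ρ(x2,x3)v1 + ν(x1)(v2,v3) + ν(x2)(v3,v1) + ν(x3)(v1,v2). In particular, the split abelian extension ĝ is isomorphic as a multiplicative 3-Hom-Lie algebra to the generalized semidirect product (g⊕V, [·,·,·]_{(ρ,ν)}, α⊕A). -/
/-- a split abelian extension `p : ĝ → g` with abelian kernel
`V = ker p`, section morphism `σ`, `A = α̂|_V`, `ρ(x,y)u = [σx, σy, u]` and
`ν(x)(u,v) = [σx, u, v]` is isomorphic, via `Φ(x + u) = σ(x) + u`, to the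
generalized semidirect product `(g ⊕ V, [·,·,·]_{(ρ,ν)}, α ⊕ A)`. -/
theorem split_abelian_extension_iso_generalized_semidirect
    {K : Type*} [Field K] [CharZero K]
    {h g : Type*} [AddCommGroup h] [Module K h] [AddCommGroup g] [Module K g]
    (bh : h → h → h → h) (αh : h → h) (Hh : IsMult3HomLie K bh αh)
    (b : g → g → g → g) (α : g → g) (Hg : IsMult3HomLie K b α)
    (p : h →ₗ[K] g) (hsurj : Function.Surjective p)
    (hpb : ∀ a c d, p (bh a c d) = b (p a) (p c) (p d))
    (hpα : ∀ a, p (αh a) = α (p a))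
    (habel : ∀ u v : LinearMap.ker p, ∀ a : h, bh (u : h) (v : h) a = 0)
    (σ : g → h) (hσ : IsLinearMap K σ)
    (hσb : ∀ x y z, σ (b x y z) = bh (σ x) (σ y) (σ z))
    (hpσ : ∀ x, p (σ x) = x)
    (hσα : ∀ x, σ (α x) = αh (σ x))
    (A : LinearMap.ker p → LinearMap.ker p)
    (hA : ∀ u : LinearMap.ker p, ((A u : h)) = αh (u : h))
    (ρ : g → g → LinearMap.ker p → LinearMap.ker p)
    (hρ : ∀ x y u, ((ρ x y u : h)) = bh (σ x) (σ y) (u : h))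
    (ν : g → LinearMap.ker p → LinearMap.ker p → LinearMap.ker p)
    (hν : ∀ x u v, ((ν x u v : h)) = bh (σ x) (u : h) (v : h)) :
    Function.Bijective (fun e : g × LinearMap.ker p => σ e.1 + (e.2 : h)) ∧
    (∀ e1 e2 e3 : g × LinearMap.ker p,
      σ (b e1.1 e2.1 e3.1) +
        ((ρ e1.1 e2.1 e3.2 + ρ e3.1 e1.1 e2.2 + ρ e2.1 e3.1 e1.2 +
          ν e1.1 e2.2 e3.2 + ν e2.1 e3.2 e1.2 + ν e3.1 e1.2 e2.2 : LinearMap.ker p) : h) =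
      bh (σ e1.1 + (e1.2 : h)) (σ e2.1 + (e2.2 : h)) (σ e3.1 + (e3.2 : h))) ∧
    (∀ e : g × LinearMap.ker p,
      σ (α e.1) + ((A e.2 : h)) = αh (σ e.1 + (e.2 : h))) := by
  
  obtain ⟨Tri, ⟨sw12, sw23⟩, hαlin, hαmor, hFJ⟩ := Hh
  refine ⟨⟨?_, ?_⟩, ?_, ?_⟩
  · -- injective
    rintro ⟨x1, u1⟩ ⟨x2, u2⟩ hxy
    simp only at hxy
    have hx : x1 = x2 := by
      have := congrArg p hxy
      simpa [hpσ, u1.2, u2.2] using this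
    subst hx
    have hu : (u1 : h) = (u2 : h) := by
      have := add_left_cancel hxy
      exact this
    exact Prod.ext rfl (Subtype.ext hu)
  · -- surjective
    intro a
    refine ⟨⟨p a, ⟨a - σ (p a), ?_⟩⟩, ?_⟩
    · simp [LinearMap.mem_ker, hpσ]
    · simp
  · -- bracket
    intro e1 e2 e3
    set s1 := σ e1.1; set s2 := σ e2.1; set s3 := σ e3.1
    set u1 := (e1.2 : h); set u2 := (e2.2 : h); set u3 := (e3.2 : h)
    have addL : ∀ x x' y z, bh (x + x') y z = bh x y z + bh x' y z :=
      fun x x' y z => (Tri.1 y z).map_add x x'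
    have addM : ∀ x y y' z, bh x (y + y') z = bh x y z + bh x y' z :=
      fun x y y' z => (Tri.2.1 x z).map_add y y'
    have addR : ∀ x y z z', bh x y (z + z') = bh x y z + bh x y z' :=
      fun x y z z' => (Tri.2.2 x y).map_add z z'
    have h1 : bh s1 u2 s3 = bh s3 s1 u2 := (sw23 s1 s3 u2).trans (sw12 s1 s3 u2).symm
    have h2 : bh u1 s2 s3 = bh s2 s3 u1 := by
      rw [sw12 s2 u1 s3, sw23 s2 s3 u1, neg_neg]
    have h3 : bh u1 s2 u3 = bh s2 u3 u1 := by
      rw [sw12 s2 u1 u3, sw23 s2 u3 u1, neg_neg]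
    have h4 : bh u1 u2 s3 = 0 := habel e1.2 e2.2 s3
    have h5 : bh u1 u2 u3 = 0 := habel e1.2 e2.2 u3
    have h6 : bh s3 u1 u2 = 0 := by
      rw [sw12 u1 s3 u2, sw23 u1 u2 s3, neg_neg, h4]
    simp only [Submodule.coe_add, hρ, hν, hσb]
    rw [addL, addM, addM, addR, addR, addR, addR, h1, h2, h3, h4, h5, h6]
    abel
  · -- αh
    intro e
    rw [hαlin.map_add, hσα, hA]
end

section
/- Let (ĝ,[·,·,·]_ĝ,α̂) and (g,[·,·,·],α) be multiplicative 3-Hom-Lie algebras and p: ĝ → g a surjective morphism (p linear, p([a,b,c]_ĝ) = [p(a),p(b),p(c)], p∘α̂ = α∘p). Let V = ker(p), assume [u,v,a]_ĝ = 0 for all u,v ∈ V, a ∈ ĝ, and let A := α̂|_V (note α̂(V) ⊆ V). Let σ: g → ĝ be a linear section: p∘σ = id_g and σ∘α = α̂∘σ. Define ρ(x,y)(u) = [σ(x),σ(y),u]_ĝ, ν(x)(u,v) = [σ(x),u,v]_ĝ, and ω(x,y,z) = [σ(x),σ(y),σ(z)]_ĝ − σ([x,y,z]) (which lies in V since p∘σ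 = id). Then the linear bijection Φ: g⊕V → ĝ, Φ(x+u) = σ(x)+u, satisfies Φ([e1,e2,e3]_{(ρ,ν,ω)}) = [Φ(e1),Φ(e2),Φ(e3)]_ĝ for all e1,e2,e3 ∈ g⊕V and Φ∘(α⊕A) = α̂∘Φ, where [x1+v1, x2+v2, x3+v3]_{(ρ,ν,ω)} = [x1,x2,x3] + ρ(x1,x2)v3 + ρ(x3,x1)v2 + ρ(x2,x3)v1 + ν(x1)(v2,v3) + ν(x2)(v3,v1) + ν(x3)(v1,v2) + ω(x1,x2,x3). Consequently (g⊕V, [·,·,·]_{(ρ,ν,ω)}, α⊕A) is a multiplicative 3-Hom-Lie algebra. -/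
/-- Transfer of a multiplicative 3-Hom-Lie structure along an injective
linear map intertwining the brackets and twist maps. -/
theorem transfer3HomLie {K : Type*} [Field K] [CharZero K]
    {g' h : Type*} [AddCommGroup g'] [Module K g'] [AddCommGroup h] [Module K h]
    (Φ : g' → h) (hlin : IsLinearMap K Φ) (hinj : Function.Injective Φ)
    (bh : h → h → h → h) (αh : h → h) (Hh : IsMult3HomLie K bh αh)
    (b' : g' → g' → g' → g') (α' : g' → g')
    (hb : ∀ x y z, Φ (b' x y z) = bh (Φ x) (Φ y) (Φ z))
    (hα : ∀ x, Φ (α' x) = αh (Φ x)) : IsMult3HomLie K b' α' := by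
  obtain ⟨⟨t1, t2, t3⟩, ⟨s1, s2⟩, alin, am, fj⟩ := Hh
  refine ⟨⟨fun y z => ⟨?_, ?_⟩, fun x z => ⟨?_, ?_⟩, fun x y => ⟨?_, ?_⟩⟩,
    ⟨?_, ?_⟩, ⟨?_, ?_⟩, ?_, ?_⟩ <;>
    (first | unfold HomFJ | skip) <;> intros <;> apply hinj <;>
    (try simp only [hb, hα, hlin.map_add, hlin.map_smul, hlin.map_neg,
      (t1 _ _).map_add, (t1 _ _).map_smul, (t2 _ _).map_add, (t2 _ _).map_smul,
      (t3 _ _).map_add, (t3 _ _).map_smul, alin.map_add, alin.map_smul]) <;>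
    first
      | rfl
      | exact s1 _ _ _
      | exact s2 _ _ _
      | exact am _ _ _
      | exact fj _ _ _ _ _

/-- an abelian extension `p : ĝ → g` with abelian kernel
`V = ker p` transfers the 3-Hom-Lie structure of `ĝ` to `g ⊕ V`. -/
theorem abelian_extension_transferred_structure
    {K : Type*} [Field K] [CharZero K]
    {h g : Type*} [AddCommGroup h] [Module K h] [AddCommGroup g] [Module K g]
    (bh : h → h → h → h) (αh : h → h) (Hh : IsMult3HomLie K bh αh)
    (b : g → g → g → g) (α : g → g) (Hg : IsMult3HomLie K b α)
    (p : h →ₗ[K] g) (hsurj : Function.Surjective p)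
    (hpb : ∀ a c d, p (bh a c d) = b (p a) (p c) (p d))
    (hpα : ∀ a, p (αh a) = α (p a))
    (habel : ∀ u v : LinearMap.ker p, ∀ a : h, bh (u : h) (v : h) a = 0)
    (σ : g → h) (hσ : IsLinearMap K σ)
    (hpσ : ∀ x, p (σ x) = x)
    (hσα : ∀ x, σ (α x) = αh (σ x))
    (A : LinearMap.ker p → LinearMap.ker p)
    (hA : ∀ u : LinearMap.ker p, ((A u : h)) = αh (u : h))
    (ρ : g → g → LinearMap.ker p → LinearMap.ker p)
    (hρ : ∀ x y u, ((ρ x y u : h)) = bh (σ x) (σ y) (u : h))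
    (ν : g → LinearMap.ker p → LinearMap.ker p → LinearMap.ker p)
    (hν : ∀ x u v, ((ν x u v : h)) = bh (σ x) (u : h) (v : h))
    (ω : g → g → g → LinearMap.ker p)
    (hω : ∀ x y z, ((ω x y z : h)) = bh (σ x) (σ y) (σ z) - σ (b x y z)) :
    Function.Bijective (fun e : g × LinearMap.ker p => σ e.1 + (e.2 : h)) ∧
    (∀ e1 e2 e3 : g × LinearMap.ker p,
      σ (b e1.1 e2.1 e3.1) +
        ((ρ e1.1 e2.1 e3.2 + ρ e3.1 e1.1 e2.2 + ρ e2.1 e3.1 e1.2 +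
          ν e1.1 e2.2 e3.2 + ν e2.1 e3.2 e1.2 + ν e3.1 e1.2 e2.2 +
          ω e1.1 e2.1 e3.1 : LinearMap.ker p) : h) =
      bh (σ e1.1 + (e1.2 : h)) (σ e2.1 + (e2.2 : h)) (σ e3.1 + (e3.2 : h))) ∧
    (∀ e : g × LinearMap.ker p,
      σ (α e.1) + ((A e.2 : h)) = αh (σ e.1 + (e.2 : h))) ∧
    IsMult3HomLie K
      (fun e1 e2 e3 : g × LinearMap.ker p =>
        (b e1.1 e2.1 e3.1,
          ρ e1.1 e2.1 e3.2 + ρ e3.1 e1.1 e2.2 + ρ e2.1 e3.1 e1.2 +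
            ν e1.1 e2.2 e3.2 + ν e2.1 e3.2 e1.2 + ν e3.1 e1.2 e2.2 +
            ω e1.1 e2.1 e3.1))
      (fun e : g × LinearMap.ker p => (α e.1, A e.2)) := by
  obtain ⟨⟨t1, t2, t3⟩, ⟨s1, s2⟩, alin, am, fj⟩ := Hh
  -- cyclic permutation lemma
  have cyc : ∀ x y z : h, bh z x y = bh x y z := by
    intro x y z
    rw [s1, s2, neg_neg]
  -- any bracket with two kernel entries in the first two slots vanishes;
  -- derive the other placements
  have ab2 : ∀ (u v : LinearMap.ker p) (a : h), bh a (u : h) (v : h) = 0 := by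
    intro u v a
    rw [cyc, habel]
  have ab3 : ∀ (u v : LinearMap.ker p) (a : h), bh (u : h) a (v : h) = 0 := by
    intro u v a
    rw [s2, habel, neg_zero]
  -- injectivity of Φ
  have hinj : Function.Injective
      (fun e : g × LinearMap.ker p => σ e.1 + (e.2 : h)) := by
    intro e1 e2 hEq
    simp only at hEq
    have h1 : e1.1 = e2.1 := by
      have := congrArg p hEq
      simpa [map_add, hpσ, (e1.2).2, (e2.2).2] using this
    have h2 : e1.2 = e2.2 := by
      apply Subtype.ext
      have := hEq
      rw [h1] at this
      exact add_left_cancel this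
    exact Prod.ext h1 h2
  have hsurjΦ : Function.Surjective
      (fun e : g × LinearMap.ker p => σ e.1 + (e.2 : h)) := by
    intro a
    refine ⟨(p a, ⟨a - σ (p a), ?_⟩), ?_⟩
    · simp [LinearMap.mem_ker, map_sub, hpσ]
    · simp
  -- the bracket identity
  have hbr : ∀ e1 e2 e3 : g × LinearMap.ker p,
      σ (b e1.1 e2.1 e3.1) +
        ((ρ e1.1 e2.1 e3.2 + ρ e3.1 e1.1 e2.2 + ρ e2.1 e3.1 e1.2 +
          ν e1.1 e2.2 e3.2 + ν e2.1 e3.2 e1.2 + ν e3.1 e1.2 e2.2 +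
          ω e1.1 e2.1 e3.1 : LinearMap.ker p) : h) =
      bh (σ e1.1 + (e1.2 : h)) (σ e2.1 + (e2.2 : h)) (σ e3.1 + (e3.2 : h)) := by
    rintro ⟨x1, u1⟩ ⟨x2, u2⟩ ⟨x3, u3⟩
    simp only
    rw [(t1 _ _).map_add, (t2 _ _).map_add, (t2 _ _).map_add,
      (t3 _ _).map_add, (t3 _ _).map_add, (t3 _ _).map_add, (t3 _ _).map_add]
    rw [habel u1 u2, habel u1 u2, ab2 u2 u3, ab3 u1 u3]
    push_cast [hρ, hν, hω]
    have e1 : bh (σ x3) (σ x1) (u2 : h) = bh (σ x1) (u2 : h) (σ x3) := by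
      rw [cyc]
    have e2 : bh (σ x2) (σ x3) (u1 : h) = bh (u1 : h) (σ x2) (σ x3) := (cyc _ _ _).symm
    have e3 : bh (σ x2) (u3 : h) (u1 : h) = bh (u1 : h) (σ x2) (u3 : h) := (cyc _ _ _).symm
    have e4 : bh (σ x3) (u1 : h) (u2 : h) = bh (u1 : h) (u2 : h) (σ x3) := by
      exact cyc _ _ _
    rw [e1, e2, e3, e4, ab2 u2 u3 (σ x1), ab3 u1 u3 (σ x2), habel u1 u2 (σ x3)]
    abel
  -- the twist identity
  have htw : ∀ e : g × LinearMap.ker p,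
      σ (α e.1) + ((A e.2 : h)) = αh (σ e.1 + (e.2 : h)) := by
    rintro ⟨x, u⟩
    simp only
    rw [hσα, hA, alin.map_add]
  -- Φ is linear
  have hlin : IsLinearMap K (fun e : g × LinearMap.ker p => σ e.1 + (e.2 : h)) := by
    constructor
    · rintro ⟨x1, u1⟩ ⟨x2, u2⟩
      simp only [Prod.fst_add, Prod.snd_add, hσ.map_add, Submodule.coe_add]
      abel
    · rintro c ⟨x, u⟩
      simp only [Prod.smul_fst, Prod.smul_snd, hσ.map_smul, SetLike.val_smul,
        smul_add]
  refine ⟨⟨hinj, hsurjΦ⟩, hbr, htw, ?_⟩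
  exact transfer3HomLie (fun e : g × LinearMap.ker p => σ e.1 + (e.2 : h))
    hlin hinj bh αh ⟨⟨t1, t2, t3⟩, ⟨s1, s2⟩, alin, am, fj⟩ _ _
    (fun e1 e2 e3 => hbr e1 e2 e3) (fun e => htw e)
end
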